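/- arXiv:1512.04084 — 6 statements merged into one kernel-verified Lean document; each statement's English description precedes it below -/
import Mathlib

section
/- Let X be an ℕ-valued random variable such that X is TN_2 and range(X) = {0,1,...,r} for some positive integer r. Then for all n ∈ ℕ and all partitions λ and μ of n, λ dominates μ if and only if condition C(λ,μ,X) holds. -/
/-!
Write `[p^m]_s` for the coefficient of `x^s` in `p(x)^m` and `q_t(m)` for `p(x)^m` truncated at
degree `t`, so that `P(E(λ, X, ·, t))` is the coefficient sequence of `∏ᵢ q_t(λᵢ)`.

Dominance implies C: going up in the dominance order is a sequence of moves of one box to a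
higher row, so it suffices that `q_t(k+1) q_t(l) ≤ q_t(k) q_t(l+1)` coefficientwise for `l < k`.
Peeling one factor `p` off `p^(k+1)` and off `p^(l+1)`, the difference of the `j`-th coefficients
is `Σ_x p_x D_x` with `D_x = Σ_{s ∈ [j-t, t]} ([p^k]_s [p^l]_{j-x-s} - [p^l]_s [p^k]_{j-x-s})`.
The summands of `D_x` are antisymmetric under `s ↦ j - x - s`, the negative ones cancel against
their mirror images, and the rest are nonnegative because the matrix `([p^m]_s)_{m,s}` has
nonnegative 2 × 2 minors; this follows from TN₂ of `p` by the 2 × 2 Cauchy–Binet formula.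

C implies dominance: for `t = r m`, `∏ᵢ q_t(λᵢ)` has degree `r Σᵢ min(λᵢ, m)` and a positive
leading coefficient, so C forces `Σᵢ min(λᵢ, m) ≤ Σᵢ min(μᵢ, m)`; for `m = λ_j` this says
`Σ_{i ≤ j} μᵢ ≤ Σ_{i ≤ j} λᵢ`.
-/

open Finset

noncomputable section

/-- The ℕ×ℕ Toeplitz matrix of a sequence `p`, with `(T_p)_{i,j} = p_{j-i}`
(and `0` when `j < i`, i.e. `p_n = 0` for negative `n`). -/
def toeplitz (p : ℕ → ℝ) : Matrix ℕ ℕ ℝ :=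
  fun i j => if i ≤ j then p (j - i) else 0

/-- A matrix is totally non-negative of order `k` iff every minor of size at
most `k` (rows and columns chosen strictly increasingly) is non-negative. -/
def IsTN (k : ℕ) (M : Matrix ℕ ℕ ℝ) : Prop :=
  ∀ l : ℕ, l ≤ k → ∀ r c : Fin l → ℕ, StrictMono r → StrictMono c →
    0 ≤ (M.submatrix r c).det

/-- A matrix is totally positive of order `k` iff every minor of size at
most `k` is positive. -/
def IsTP (k : ℕ) (M : Matrix ℕ ℕ ℝ) : Prop :=
  ∀ l : ℕ, l ≤ k → ∀ r c : Fin l → ℕ, StrictMono r → StrictMono c →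
    0 < (M.submatrix r c).det

/-- The matrix `S_p` with `(S_p)_{i,j} = (p^i)_j`, the coefficient of `x^j` in
`p(x)^i` where `p(x) = Σ p_n x^n` (and `p(x)^0 = 1`). -/
def sMatrix (p : ℕ → ℝ) : Matrix ℕ ℕ ℝ :=
  fun i j => PowerSeries.coeff j (PowerSeries.mk p ^ i)

/-- A partition: a non-increasing function from the positive integers to ℕ with
finite support (we set the irrelevant value at `0` to be `0`). -/
structure PartitionSeq where
  part : ℕ → ℕ
  zero : part 0 = 0
  antitone : ∀ ⦃i j : ℕ⦄, 1 ≤ i → i ≤ j → part j ≤ part i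
  finSupp : (Function.support part).Finite

/-- The weight `|λ|` of a partition. -/
def PartitionSeq.weight (lam : PartitionSeq) : ℕ := ∑ᶠ i, lam.part i

/-- `λ` dominates `μ`: equal weights and partial sums of `λ` are at least
those of `μ`. -/
def PartitionSeq.Dominates (lam mu : PartitionSeq) : Prop :=
  lam.weight = mu.weight ∧
  ∀ j : ℕ, 1 ≤ j →
    ∑ i ∈ Finset.Icc 1 j, mu.part i ≤ ∑ i ∈ Finset.Icc 1 j, lam.part i

/-- `f(λ, p(x), t, x) = ∏_i (p(x)^{λ(i)} |_t)`, the product over rows of the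
truncations to degree `t` of powers of the generating function. -/
def fPoly (lam : PartitionSeq) (p : ℕ → ℝ) (t : ℕ) : Polynomial ℝ :=
  ∏ᶠ i : ℕ, PowerSeries.trunc (t + 1) (PowerSeries.mk p ^ lam.part i)

/-- `P(E(λ,X,j,t))` for `X` with probability mass function `p`: the coefficient
of `x^j` in `∏_i ((p_X(x))^{λ(i)} |_t)`. -/
def probE (p : ℕ → ℝ) (lam : PartitionSeq) (j t : ℕ) : ℝ :=
  (fPoly lam p t).coeff j

/-- Condition `C(λ,μ,X)`: `P(E(λ,X,j,t)) ≤ P(E(μ,X,j,t))` for all `j, t ∈ ℕ`. -/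
def CondC (p : ℕ → ℝ) (lam mu : PartitionSeq) : Prop :=
  ∀ j t : ℕ, probE p lam j t ≤ probE p mu j t

open Polynomial

def zcoeff {R : Type*} [Semiring R] (F : PowerSeries R) (s : ℤ) : R :=
  if 0 ≤ s then PowerSeries.coeff s.toNat F else 0

section zcoeff

variable {R : Type*} [Semiring R]

@[simp]
lemma zcoeff_natCast (F : PowerSeries R) (n : ℕ) : zcoeff F n = PowerSeries.coeff n F := by
  simp [zcoeff]

lemma zcoeff_of_neg (F : PowerSeries R) {s : ℤ} (hs : s < 0) : zcoeff F s = 0 := by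
  simp [zcoeff, not_le.2 hs]

lemma zcoeff_mul_sub_eq_sum (F G : PowerSeries R) {i j : ℤ} {S : Finset ℤ} (hS : Icc i j ⊆ S) :
    zcoeff (F * G) (j - i) = ∑ s ∈ S, zcoeff F (s - i) * zcoeff G (j - s) := by
  rw [← Finset.sum_subset hS fun s hs hs' => ?_]
  · rcases lt_or_ge j i with hji | hij
    · rw [zcoeff_of_neg _ (by omega), Finset.Icc_eq_empty_of_lt hji, Finset.sum_empty]
    obtain ⟨n, hn⟩ : ∃ n : ℕ, j - i = n := ⟨(j - i).toNat, by omega⟩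
    rw [hn, zcoeff_natCast, PowerSeries.coeff_mul, Finset.Nat.sum_antidiagonal_eq_sum_range_succ_mk]
    refine Finset.sum_nbij' (fun a => i + a) (fun s => (s - i).toNat) ?_ ?_ ?_ ?_ ?_
    · intro a ha; simp only [Finset.mem_range] at ha; simp only [Finset.mem_Icc]; omega
    · intro s hs; simp only [Finset.mem_Icc] at hs; simp only [Finset.mem_range]; omega
    · intro a _; simp
    · intro s hs; simp only [Finset.mem_Icc] at hs; omega
    · intro a ha
      simp only [Finset.mem_range] at ha
      rw [show i + (a : ℤ) - i = (a : ℕ) by ring, show j - (i + a) = ((n - a : ℕ) : ℤ) by omega,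
        zcoeff_natCast, zcoeff_natCast]
  · simp only [Finset.mem_Icc, not_and_or, not_le] at hs'
    rcases hs' with h | h
    · rw [zcoeff_of_neg F (by omega), zero_mul]
    · rw [zcoeff_of_neg G (by omega), mul_zero]

lemma zcoeff_mul_eq_sum (F G : PowerSeries R) {w : ℤ} {S : Finset ℤ}
    (hS : Icc 0 w ⊆ S) :
    zcoeff (F * G) w = ∑ x ∈ S, zcoeff F x * zcoeff G (w - x) := by
  simpa using zcoeff_mul_sub_eq_sum F G (i := 0) hS

lemma coeff_trunc_mul_trunc (F G : PowerSeries R) (t j : ℕ) :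
    (PowerSeries.trunc (t + 1) F * PowerSeries.trunc (t + 1) G).coeff j =
      ∑ s ∈ Icc ((j : ℤ) - t) t, zcoeff F s * zcoeff G (j - s) := by
  have htrunc : ∀ (H : PowerSeries R) (s : ℤ),
      zcoeff (PowerSeries.trunc (t + 1) H : PowerSeries R) s = if s ≤ t then zcoeff H s else 0 := by
    intro H s
    rcases lt_or_ge s 0 with hs | hs
    · simp [zcoeff_of_neg _ hs]
    · obtain ⟨n, rfl⟩ : ∃ n : ℕ, s = n := ⟨s.toNat, by omega⟩
      simp [Polynomial.coeff_coe, PowerSeries.coeff_trunc]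
  rw [← Polynomial.coeff_coe, Polynomial.coe_mul, ← zcoeff_natCast,
    zcoeff_mul_eq_sum _ _ (Finset.subset_union_left (s₂ := Icc ((j : ℤ) - t) t))]
  symm
  refine Finset.sum_subset_zero_on_sdiff Finset.subset_union_right (fun s hs => ?_) (fun s hs => ?_)
  · simp only [Finset.mem_sdiff, Finset.mem_union, Finset.mem_Icc] at hs
    rw [htrunc, htrunc]
    split_ifs <;> first | simp | omega
  · simp only [Finset.mem_Icc] at hs
    rw [htrunc, htrunc, if_pos hs.2, if_pos (by omega)]

end zcoeff

/-- Pólya frequency of order 2, without the sign condition on `f`: the Toeplitz kernel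
`(i, j) ↦ f (j - i)` has nonnegative 2 × 2 minors. -/
def IsPF2 (f : ℤ → ℝ) : Prop :=
  ∀ ⦃i₁ i₂ j₁ j₂ : ℤ⦄, i₁ ≤ i₂ → j₁ ≤ j₂ → f (j₂ - i₁) * f (j₁ - i₂) ≤ f (j₁ - i₁) * f (j₂ - i₂)

/-- The 2 × 2 Cauchy–Binet formula, as an inequality. -/
lemma sum_mul_sum_le_sum_mul_sum_of_minors {ι : Type*} [LinearOrder ι] (S : Finset ι)
    (u₁ u₂ v₁ v₂ : ι → ℝ) (hu : ∀ s s', s ≤ s' → u₁ s' * u₂ s ≤ u₁ s * u₂ s')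
    (hv : ∀ s s', s ≤ s' → v₁ s' * v₂ s ≤ v₁ s * v₂ s') :
    (∑ s ∈ S, u₁ s * v₂ s) * (∑ s ∈ S, u₂ s * v₁ s) ≤
      (∑ s ∈ S, u₁ s * v₁ s) * (∑ s ∈ S, u₂ s * v₂ s) := by
  have hterm : ∀ s s', 0 ≤ (u₁ s * u₂ s' - u₁ s' * u₂ s) * (v₁ s * v₂ s' - v₁ s' * v₂ s) := by
    intro s s'
    rcases le_total s s' with h | h
    · exact mul_nonneg (by linarith [hu s s' h]) (by linarith [hv s s' h])
    · exact mul_nonneg_of_nonpos_of_nonpos (by linarith [hu s' s h]) (by linarith [hv s' s h])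
  have hsum := Finset.sum_nonneg fun s (_ : s ∈ S) =>
    Finset.sum_nonneg fun s' (_ : s' ∈ S) => hterm s s'
  set Y : ι → ι → ℝ := fun s s' => u₁ s * v₁ s * (u₂ s' * v₂ s') - u₁ s * v₂ s * (u₂ s' * v₁ s')
  have hexpand : ∑ s ∈ S, ∑ s' ∈ S,
      (u₁ s * u₂ s' - u₁ s' * u₂ s) * (v₁ s * v₂ s' - v₁ s' * v₂ s) =
      2 * ((∑ s ∈ S, u₁ s * v₁ s) * (∑ s ∈ S, u₂ s * v₂ s) -
        (∑ s ∈ S, u₁ s * v₂ s) * (∑ s ∈ S, u₂ s * v₁ s)) := calc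
    _ = ∑ s ∈ S, ∑ s' ∈ S, (Y s s' + Y s' s) :=
      Finset.sum_congr rfl fun s _ => Finset.sum_congr rfl fun s' _ => by simp only [Y]; ring
    _ = 2 * ∑ s ∈ S, ∑ s' ∈ S, Y s s' := by
      simp only [Finset.sum_add_distrib]
      rw [Finset.sum_comm (f := fun s s' => Y s' s)]
      ring
    _ = _ := by simp only [Y, Finset.sum_sub_distrib, Finset.sum_mul_sum]
  linarith

lemma isPF2_zcoeff_one : IsPF2 (zcoeff (1 : PowerSeries ℝ)) := by
  intro i₁ i₂ j₁ j₂ hi hj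
  have h : ∀ s : ℤ, zcoeff (1 : PowerSeries ℝ) s = if s = 0 then 1 else 0 := by
    intro s
    rcases lt_or_ge s 0 with hs | hs
    · rw [zcoeff_of_neg _ hs, if_neg hs.ne]
    · obtain ⟨n, rfl⟩ : ∃ n : ℕ, s = n := ⟨s.toNat, by omega⟩
      simp [PowerSeries.coeff_one]
  simp only [h]
  split_ifs <;> first | omega | norm_num

lemma IsPF2.zcoeff_mul {F G : PowerSeries ℝ} (hF : IsPF2 (zcoeff F)) (hG : IsPF2 (zcoeff G)) :
    IsPF2 (zcoeff (F * G)) := by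
  intro i₁ i₂ j₁ j₂ hi hj
  have hconv : ∀ i j, i₁ ≤ i → j ≤ j₂ → zcoeff (F * G) (j - i) =
      ∑ s ∈ Icc i₁ j₂, zcoeff F (s - i) * zcoeff G (j - s) := fun i j hi hj =>
    zcoeff_mul_sub_eq_sum F G (Finset.Icc_subset_Icc hi hj)
  rw [hconv i₁ j₂ le_rfl le_rfl, hconv i₂ j₁ hi hj, hconv i₁ j₁ le_rfl hj, hconv i₂ j₂ hi le_rfl]
  refine sum_mul_sum_le_sum_mul_sum_of_minors _ _ _ _ _ (fun s s' hs => hF hi hs) ?_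
  intro s s' hs
  rw [mul_comm]
  exact hG hs hj

lemma IsPF2.zcoeff_pow {F : PowerSeries ℝ} (hF : IsPF2 (zcoeff F)) (m : ℕ) :
    IsPF2 (zcoeff (F ^ m)) := by
  induction m with
  | zero => simpa using isPF2_zcoeff_one
  | succ m ih => simpa [pow_succ] using ih.zcoeff_mul hF

lemma coeff_pow_nonneg {F : PowerSeries ℝ} (hF : ∀ n, 0 ≤ PowerSeries.coeff n F) (m w : ℕ) :
    0 ≤ PowerSeries.coeff w (F ^ m) := by
  rw [PowerSeries.coeff_pow]
  exact Finset.sum_nonneg fun _ _ => Finset.prod_nonneg fun _ _ => hF _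

lemma coeff_trunc_pow_nonneg {F : PowerSeries ℝ} (hF : ∀ n, 0 ≤ PowerSeries.coeff n F)
    (m t w : ℕ) : 0 ≤ (PowerSeries.trunc (t + 1) (F ^ m)).coeff w := by
  rw [PowerSeries.coeff_trunc]
  split_ifs
  exacts [coeff_pow_nonneg hF m w, le_rfl]

lemma zcoeff_pow_nonneg {F : PowerSeries ℝ} (hF : ∀ n, 0 ≤ PowerSeries.coeff n F) (m : ℕ)
    (s : ℤ) : 0 ≤ zcoeff (F ^ m) s := by
  unfold zcoeff
  split_ifs
  exacts [coeff_pow_nonneg hF m _, le_rfl]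

lemma zcoeff_pow_mul_le {F : PowerSeries ℝ} (hF0 : ∀ n, 0 ≤ PowerSeries.coeff n F)
    (hF : IsPF2 (zcoeff F)) {m₀ m₁ : ℕ} (hm : m₀ ≤ m₁) {s₀ s₁ : ℤ} (hs : s₀ ≤ s₁) :
    zcoeff (F ^ m₀) s₁ * zcoeff (F ^ m₁) s₀ ≤ zcoeff (F ^ m₁) s₁ * zcoeff (F ^ m₀) s₀ := by
  obtain ⟨d, rfl⟩ := Nat.exists_eq_add_of_le' hm
  have hconv : ∀ s ≤ s₁, zcoeff (F ^ (d + m₀)) s =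
      ∑ y ∈ Icc 0 s₁, zcoeff (F ^ d) y * zcoeff (F ^ m₀) (s - y) := fun s hs => by
    rw [pow_add]
    exact zcoeff_mul_eq_sum _ _ (Finset.Icc_subset_Icc_right hs)
  rw [hconv s₀ hs, hconv s₁ le_rfl, Finset.mul_sum, Finset.sum_mul]
  refine Finset.sum_le_sum fun y hy => ?_
  have hy : 0 ≤ y := (Finset.mem_Icc.1 hy).1
  have := (hF.zcoeff_pow m₀) hy hs
  simp only [sub_zero] at this
  nlinarith [zcoeff_pow_nonneg hF0 d y]

lemma toeplitz_apply_eq_zcoeff (p : ℕ → ℝ) (a b : ℕ) :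
    toeplitz p a b = zcoeff (PowerSeries.mk p) ((b : ℤ) - a) := by
  unfold toeplitz
  split_ifs with h
  · rw [show (b : ℤ) - a = ((b - a : ℕ) : ℤ) by omega, zcoeff_natCast, PowerSeries.coeff_mk]
  · rw [zcoeff_of_neg _ (by omega)]

lemma isPF2_of_isTN_toeplitz {p : ℕ → ℝ} (hTN : IsTN 2 (toeplitz p)) :
    IsPF2 (zcoeff (PowerSeries.mk p)) := by
  intro i₁ i₂ j₁ j₂ hi hj
  rcases hi.eq_or_lt with rfl | hi
  · exact le_of_eq (mul_comm _ _)
  rcases hj.eq_or_lt with rfl | hj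
  · exact le_rfl
  -- translate all indices by `c` into `ℕ`, where `hTN` applies
  set c := min i₁ j₁
  have hminor := hTN 2 le_rfl ![(i₁ - c).toNat, (i₂ - c).toNat] ![(j₁ - c).toNat, (j₂ - c).toNat]
    (by simp [Fin.strictMono_iff_lt_succ]; omega) (by simp [Fin.strictMono_iff_lt_succ]; omega)
  simp only [Matrix.det_fin_two, Matrix.submatrix_apply, toeplitz_apply_eq_zcoeff] at hminor
  simp only [Matrix.cons_val_zero, Matrix.cons_val_one] at hminor
  have e : ∀ a b : ℤ, c ≤ a → c ≤ b → ((b - c).toNat : ℤ) - ((a - c).toNat : ℤ) = b - a := by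
    intro a b ha hb; omega
  rw [e _ _ (min_le_left _ _) (min_le_right _ _), e _ _ (by omega) (min_le_right _ _),
    e _ _ (min_le_left _ _) (by omega), e _ _ (by omega) (by omega)] at hminor
  linarith

lemma sum_nonneg_of_antisymm {S : Finset ℤ} {h : ℤ → ℝ} (e : ℤ) (hanti : ∀ v, h (e - v) = -h v)
    (hnonneg : ∀ v ∈ S, e ≤ 2 * v → 0 ≤ h v) (hS : ∀ v ∈ S, 2 * v < e → e - v ∈ S) :
    0 ≤ ∑ v ∈ S, h v := by
  set L := S.filter fun v => 2 * v < e
  have hmirror : (L.image (e - ·)) ⊆ S.filter fun v => ¬ 2 * v < e := by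
    intro v hv
    obtain ⟨w, hw, rfl⟩ := Finset.mem_image.1 hv
    rw [Finset.mem_filter] at hw ⊢
    exact ⟨hS w hw.1 hw.2, by omega⟩
  have hL : ∑ v ∈ L, h v = -∑ v ∈ L.image (e - ·), h v := by
    rw [Finset.sum_image fun a _ b _ hab => by simpa using hab]
    simp [hanti]
  rw [← Finset.sum_filter_not_add_sum_filter S (fun v => 2 * v < e), hL,
    ← Finset.sum_sdiff hmirror, add_neg_cancel_right]
  refine Finset.sum_nonneg fun v hv => ?_
  simp only [Finset.mem_sdiff, Finset.mem_filter, not_lt] at hv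
  exact hnonneg v hv.1.1 hv.1.2

section exchange

variable {F : PowerSeries ℝ}

lemma sum_Icc_reflect {M : Type*} [AddCommMonoid M] (f : ℤ → M) (j t : ℤ) :
    ∑ s ∈ Icc (j - t) t, f (j - s) = ∑ s ∈ Icc (j - t) t, f s :=
  Finset.sum_nbij' (j - ·) (j - ·) (by intro s hs; simp only [Finset.mem_Icc] at hs ⊢; omega)
    (by intro s hs; simp only [Finset.mem_Icc] at hs ⊢; omega) (by simp) (by simp) (by simp)

lemma sum_zcoeff_mul_zcoeff_pow_succ (a b : ℕ) (j t : ℤ) :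
    ∑ s ∈ Icc (j - t) t, zcoeff (F ^ a) s * zcoeff (F ^ (b + 1)) (j - s) =
      ∑ x ∈ Icc 0 t,
        zcoeff F x * ∑ s ∈ Icc (j - t) t, zcoeff (F ^ a) s * zcoeff (F ^ b) (j - x - s) := by
  have hconv : ∀ s ∈ Icc (j - t) t, zcoeff (F ^ (b + 1)) (j - s) =
      ∑ x ∈ Icc 0 t, zcoeff F x * zcoeff (F ^ b) (j - x - s) := by
    intro s hs
    rw [Finset.mem_Icc] at hs
    rw [pow_succ', zcoeff_mul_eq_sum (S := Icc 0 t) _ _ (Finset.Icc_subset_Icc_right (by omega))]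
    simp only [sub_right_comm]
  rw [Finset.sum_congr rfl fun s hs => by rw [hconv s hs, Finset.mul_sum], Finset.sum_comm]
  simp only [Finset.mul_sum]
  exact Finset.sum_congr rfl fun x _ => Finset.sum_congr rfl fun s _ => by ring

lemma sum_zcoeff_pow_mul_le (hF0 : ∀ n, 0 ≤ PowerSeries.coeff n F) (hF : IsPF2 (zcoeff F))
    {k l : ℕ} (hlk : l ≤ k) (j t : ℤ) {x : ℤ} (hx : 0 ≤ x) :
    ∑ s ∈ Icc (j - t) t, zcoeff (F ^ l) s * zcoeff (F ^ k) (j - x - s) ≤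
      ∑ s ∈ Icc (j - t) t, zcoeff (F ^ k) s * zcoeff (F ^ l) (j - x - s) := by
  rw [← sub_nonneg, ← Finset.sum_sub_distrib]
  refine sum_nonneg_of_antisymm (j - x) (fun v => ?_) (fun v _ hv => ?_) (fun v hv hv' => ?_)
  · simp only [sub_sub_cancel]; ring
  · exact sub_nonneg.2 (zcoeff_pow_mul_le hF0 hF hlk (by omega))
  · simp only [Finset.mem_Icc] at hv ⊢; omega

lemma coeff_trunc_pow_mul_le (hF0 : ∀ n, 0 ≤ PowerSeries.coeff n F) (hF : IsPF2 (zcoeff F))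
    {k l : ℕ} (hlk : l < k) (t j : ℕ) :
    (PowerSeries.trunc (t + 1) (F ^ (k + 1)) * PowerSeries.trunc (t + 1) (F ^ l)).coeff j ≤
      (PowerSeries.trunc (t + 1) (F ^ k) * PowerSeries.trunc (t + 1) (F ^ (l + 1))).coeff j := by
  rw [coeff_trunc_mul_trunc, coeff_trunc_mul_trunc,
    ← sum_Icc_reflect (fun s => zcoeff (F ^ (k + 1)) s * zcoeff (F ^ l) (j - s))]
  simp only [sub_sub_cancel, mul_comm (zcoeff (F ^ (k + 1)) _)]
  rw [sum_zcoeff_mul_zcoeff_pow_succ, sum_zcoeff_mul_zcoeff_pow_succ]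
  refine Finset.sum_le_sum fun x hx => mul_le_mul_of_nonneg_left ?_ ?_
  · exact sum_zcoeff_pow_mul_le hF0 hF hlk.le _ _ (Finset.mem_Icc.1 hx).1
  · simpa using zcoeff_pow_nonneg hF0 1 x

end exchange

section support

variable {F : PowerSeries ℝ} {r : ℕ}

lemma coeff_pow_eq_zero_of_lt (hFr : ∀ n, r < n → PowerSeries.coeff n F = 0) {m w : ℕ}
    (hw : r * m < w) : PowerSeries.coeff w (F ^ m) = 0 := by
  induction m generalizing w with
  | zero => simp [PowerSeries.coeff_one]; omega
  | succ m ih =>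
    rw [pow_succ, PowerSeries.coeff_mul]
    refine Finset.sum_eq_zero fun x hx => ?_
    rw [Finset.HasAntidiagonal.mem_antidiagonal] at hx
    rcases lt_or_ge (r * m) x.1 with h | h
    · rw [ih h, zero_mul]
    · rw [hFr x.2 (by rw [Nat.mul_succ] at hw; omega), mul_zero]

lemma coeff_pow_pos (hF0 : ∀ n, 0 ≤ PowerSeries.coeff n F)
    (hFpos : ∀ n ≤ r, 0 < PowerSeries.coeff n F) {m w : ℕ} (hw : w ≤ r * m) :
    0 < PowerSeries.coeff w (F ^ m) := by
  induction m generalizing w with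
  | zero => simp [PowerSeries.coeff_one, show w = 0 by omega]
  | succ m ih =>
    rw [pow_succ, PowerSeries.coeff_mul]
    refine Finset.sum_pos' (fun x _ => mul_nonneg ?_ (hF0 _)) ⟨(w - min w r, min w r), ?_, ?_⟩
    · exact coeff_pow_nonneg hF0 m x.1
    · rw [Finset.HasAntidiagonal.mem_antidiagonal]; omega
    · exact mul_pos (ih (by rw [Nat.mul_succ] at hw; omega)) (hFpos _ (min_le_right _ _))

lemma natDegree_trunc_pow (hF0 : ∀ n, 0 ≤ PowerSeries.coeff n F)
    (hFr : ∀ n, r < n → PowerSeries.coeff n F = 0) (hFpos : ∀ n ≤ r, 0 < PowerSeries.coeff n F)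
    (m m₀ : ℕ) :
    (PowerSeries.trunc (r * m₀ + 1) (F ^ m)).natDegree = r * min m m₀ ∧
      0 < (PowerSeries.trunc (r * m₀ + 1) (F ^ m)).leadingCoeff := by
  have hmin : r * min m m₀ ≤ r * m ∧ r * min m m₀ ≤ r * m₀ :=
    ⟨Nat.mul_le_mul_left r (min_le_left _ _), Nat.mul_le_mul_left r (min_le_right _ _)⟩
  have htop : 0 < (PowerSeries.trunc (r * m₀ + 1) (F ^ m)).coeff (r * min m m₀) := by
    rw [PowerSeries.coeff_trunc, if_pos (by omega)]
    exact coeff_pow_pos hF0 hFpos hmin.1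
  have hdeg : (PowerSeries.trunc (r * m₀ + 1) (F ^ m)).natDegree = r * min m m₀ := by
    refine Polynomial.natDegree_eq_of_le_of_coeff_ne_zero ?_ htop.ne'
    refine Polynomial.natDegree_le_iff_coeff_eq_zero.2 fun w hw => ?_
    rw [PowerSeries.coeff_trunc]
    split_ifs with h
    · exact coeff_pow_eq_zero_of_lt hFr (by
        rcases le_total m m₀ with h' | h' <;> simp [h'] at hw <;> nlinarith)
    · rfl
  exact ⟨hdeg, by rwa [Polynomial.leadingCoeff, hdeg]⟩

end support

lemma natDegree_le_of_coeff_le {P Q : ℝ[X]} (hPQ : ∀ j, P.coeff j ≤ Q.coeff j)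
    (hP : 0 < P.leadingCoeff) : P.natDegree ≤ Q.natDegree := by
  by_contra! h
  have := hPQ P.natDegree
  rw [Polynomial.coeff_eq_zero_of_natDegree_lt h] at this
  exact (hP.trans_le this).false

lemma sum_min_le_of_coeff_prod_le {F : PowerSeries ℝ} {r : ℕ} (hr : 0 < r)
    (hF0 : ∀ n, 0 ≤ PowerSeries.coeff n F) (hFr : ∀ n, r < n → PowerSeries.coeff n F = 0)
    (hFpos : ∀ n ≤ r, 0 < PowerSeries.coeff n F) {ι : Type*} (s : Finset ι) (lam mu : ι → ℕ)
    (m₀ : ℕ)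
    (h : ∀ j, (∏ i ∈ s, PowerSeries.trunc (r * m₀ + 1) (F ^ lam i)).coeff j ≤
      (∏ i ∈ s, PowerSeries.trunc (r * m₀ + 1) (F ^ mu i)).coeff j) :
    ∑ i ∈ s, min (lam i) m₀ ≤ ∑ i ∈ s, min (mu i) m₀ := by
  have hprod : ∀ ν : ι → ℕ,
      (∏ i ∈ s, PowerSeries.trunc (r * m₀ + 1) (F ^ ν i)).natDegree = r * ∑ i ∈ s, min (ν i) m₀ ∧
      0 < (∏ i ∈ s, PowerSeries.trunc (r * m₀ + 1) (F ^ ν i)).leadingCoeff := by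
    intro ν
    have hν := fun i => natDegree_trunc_pow hF0 hFr hFpos (ν i) m₀
    rw [Polynomial.natDegree_prod _ _ fun i _ => Polynomial.leadingCoeff_ne_zero.1 (hν i).2.ne',
      Polynomial.leadingCoeff_prod, Finset.mul_sum]
    exact ⟨Finset.sum_congr rfl fun i _ => (hν i).1, Finset.prod_pos fun i _ => (hν i).2⟩
  have := natDegree_le_of_coeff_le h (hprod lam).2
  rw [(hprod lam).1, (hprod mu).1] at this
  exact Nat.le_of_mul_le_mul_left this hr

def partialSum (ν : ℕ → ℕ) (j : ℕ) : ℕ := ∑ i ∈ Icc 1 j, ν i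

lemma partialSum_zero (ν : ℕ → ℕ) : partialSum ν 0 = 0 := rfl

lemma partialSum_succ (ν : ℕ → ℕ) (j : ℕ) : partialSum ν (j + 1) = partialSum ν j + ν (j + 1) :=
  Finset.sum_Icc_succ_top (by omega) ν

lemma partialSum_of_one_le (ν : ℕ → ℕ) {j : ℕ} (hj : 1 ≤ j) :
    partialSum ν j = partialSum ν (j - 1) + ν j := by
  obtain ⟨j, rfl⟩ := Nat.exists_eq_add_of_le' hj
  exact partialSum_succ ν j

lemma sum_Icc_one_eq_sum_Icc_add_sum_Ioc (f : ℕ → ℕ) {j n : ℕ} (hjn : j ≤ n) :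
    ∑ i ∈ Icc 1 n, f i = ∑ i ∈ Icc 1 j, f i + ∑ i ∈ Ioc j n, f i := by
  have hIoc : ∀ m, Icc 1 m = Ioc 0 m := Finset.Icc_add_one_left_eq_Ioc 0
  rw [hIoc, hIoc, Finset.sum_Ioc_consecutive f (Nat.zero_le j) hjn]

def moveBox (ν : ℕ → ℕ) (a c : ℕ) : ℕ → ℕ :=
  fun i => if i = a then ν a + 1 else if i = c then ν c - 1 else ν i

section moveBox

variable {ν : ℕ → ℕ} {a c : ℕ}

lemma partialSum_moveBox (ha : 1 ≤ a) (hac : a < c) (hc : 1 ≤ ν c) (j : ℕ) :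
    partialSum (moveBox ν a c) j + (if c ≤ j then 1 else 0) =
      partialSum ν j + (if a ≤ j then 1 else 0) := by
  induction j with
  | zero => simp only [partialSum_zero]; split_ifs <;> omega
  | succ j ih =>
    simp only [partialSum_succ, moveBox] at ih ⊢
    split_ifs at ih ⊢ <;> subst_vars <;> omega

lemma antitoneOn_moveBox {n : ℕ} (hν : AntitoneOn ν (Set.Icc 1 n)) (ha1 : 1 ≤ a) (hac : a < c)
    (hcn : c ≤ n) (hc : 1 ≤ ν c) (hrowa : ∀ i, 1 ≤ i → i < a → ν a < ν i)
    (hrowc : ∀ i, c < i → i ≤ n → ν i < ν c) :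
    AntitoneOn (moveBox ν a c) (Set.Icc 1 n) := by
  intro i hi k hk hik
  simp only [Set.mem_Icc] at hi hk
  have hνik := hν ⟨hi.1, hi.2⟩ ⟨hk.1, hk.2⟩ hik
  have hai : i < a → ν a < ν i := hrowa i hi.1
  have hck : c < k → ν k < ν c := fun h => hrowc k h hk.2
  have hca : ν c ≤ ν a := hν ⟨ha1, by omega⟩ ⟨by omega, hcn⟩ hac.le
  simp only [moveBox]
  split_ifs <;> subst_vars <;> omega

end moveBox

section dominance

variable {lam mu : ℕ → ℕ} {n : ℕ}

/-- `a` is the first row where the partial sums differ, `c` the first later row where they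
agree again. -/
lemma exists_moveBox (hlam : AntitoneOn lam (Set.Icc 1 n)) (hmu : AntitoneOn mu (Set.Icc 1 n))
    (hdom : ∀ j ≤ n, partialSum mu j ≤ partialSum lam j)
    (htot : partialSum mu n = partialSum lam n)
    (hlt : ∃ j ≤ n, partialSum mu j < partialSum lam j) :
    ∃ a c, 1 ≤ a ∧ a < c ∧ c ≤ n ∧ 1 ≤ mu c ∧ (∀ i, 1 ≤ i → i < a → mu a < mu i) ∧
      (∀ i, c < i → i ≤ n → mu i < mu c) ∧
      ∀ j, a ≤ j → j < c → partialSum mu j < partialSum lam j := by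
  classical
  obtain ⟨han, ha⟩ := Nat.find_spec hlt
  set a := Nat.find hlt
  have hbefore : ∀ i < a, partialSum mu i = partialSum lam i := fun i hi =>
    (hdom i (by omega)).antisymm (not_lt.1 fun h => Nat.find_min hlt hi ⟨by omega, h⟩)
  have ha1 : 1 ≤ a := Nat.one_le_iff_ne_zero.2 fun h => by simp [h, partialSum_zero] at ha
  have han' : a < n := lt_of_le_of_ne han fun h => by rw [h] at ha; omega
  have hcex : ∃ c, a < c ∧ partialSum mu c = partialSum lam c := ⟨n, han', htot⟩
  obtain ⟨hac, hc⟩ := Nat.find_spec hcex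
  set c := Nat.find hcex
  have hcn : c ≤ n := Nat.find_min' hcex ⟨han', htot⟩
  have hbetween : ∀ j, a ≤ j → j < c → partialSum mu j < partialSum lam j := by
    intro j haj hjc
    rcases haj.eq_or_lt with rfl | haj
    · exact ha
    · exact (hdom j (by omega)).lt_of_ne fun h => Nat.find_min hcex hjc ⟨haj, h⟩
  have hsa := hbefore (a - 1) (by omega)
  have hsc := hbetween (c - 1) (by omega) (by omega)
  rw [partialSum_of_one_le mu ha1, partialSum_of_one_le lam ha1] at ha
  rw [partialSum_of_one_le mu (by omega), partialSum_of_one_le lam (by omega)] at hc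
  refine ⟨a, c, ha1, hac, hcn, by omega, fun i hi hia => ?_, fun i hci hin => ?_, hbetween⟩
  · have hi' := hbefore i hia
    have hi'' := hbefore (i - 1) (by omega)
    rw [partialSum_of_one_le mu hi, partialSum_of_one_le lam hi] at hi'
    have := hlam ⟨hi, by omega⟩ ⟨ha1, han⟩ hia.le
    omega
  · have hstep := hmu ⟨by omega, by omega⟩ ⟨by omega, hin⟩ (show c + 1 ≤ i by omega)
    have hmu1 := hmu ⟨by omega, hcn⟩ ⟨by omega, show c + 1 ≤ n by omega⟩ (Nat.le_succ c)
    have hlam1 := hlam ⟨by omega, hcn⟩ ⟨by omega, show c + 1 ≤ n by omega⟩ (Nat.le_succ c)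
    have hdom1 := hdom (c + 1) (by omega)
    rw [partialSum_succ, partialSum_succ, partialSum_of_one_le mu (by omega),
      partialSum_of_one_le lam (by omega)] at hdom1
    omega

lemma eq_of_partialSum_eq (h : ∀ j ≤ n, partialSum mu j = partialSum lam j) :
    ∀ i ∈ Icc 1 n, mu i = lam i := by
  intro i hi
  rw [Finset.mem_Icc] at hi
  have h1 := h i hi.2
  have h2 := h (i - 1) (by omega)
  rw [partialSum_of_one_le mu hi.1, partialSum_of_one_le lam hi.1] at h1
  omega

end dominance

lemma coeff_mul_le_mul_left {R P Q : ℝ[X]} (hR : ∀ j, 0 ≤ R.coeff j)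
    (hPQ : ∀ j, P.coeff j ≤ Q.coeff j) (j : ℕ) : (R * P).coeff j ≤ (R * Q).coeff j := by
  simp only [Polynomial.coeff_mul]
  exact Finset.sum_le_sum fun x _ => mul_le_mul_of_nonneg_left (hPQ x.2) (hR x.1)

lemma coeff_prod_nonneg {ι : Type*} (s : Finset ι) (f : ι → ℝ[X])
    (hf : ∀ i ∈ s, ∀ j, 0 ≤ (f i).coeff j) (j : ℕ) : 0 ≤ (∏ i ∈ s, f i).coeff j := by
  refine Finset.prod_induction f (fun P => ∀ j, 0 ≤ P.coeff j) (fun P Q hP hQ j => ?_)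
    (fun j => ?_) hf j
  · rw [Polynomial.coeff_mul]
    exact Finset.sum_nonneg fun x _ => mul_nonneg (hP _) (hQ _)
  · rw [Polynomial.coeff_one]
    split_ifs <;> norm_num

section exchange_order

variable {q : ℕ → ℝ[X]}

lemma coeff_prod_moveBox_le (hq0 : ∀ m j, 0 ≤ (q m).coeff j)
    (hq : ∀ k l, l < k → ∀ j, (q (k + 1) * q l).coeff j ≤ (q k * q (l + 1)).coeff j)
    {ν : ℕ → ℕ} {n a c : ℕ} (ha : a ∈ Icc 1 n) (hc : c ∈ Icc 1 n)
    (hac : a ≠ c) (hc1 : 1 ≤ ν c) (hca : ν c ≤ ν a) (j : ℕ) :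
    (∏ i ∈ Icc 1 n, q (moveBox ν a c i)).coeff j ≤ (∏ i ∈ Icc 1 n, q (ν i)).coeff j := by
  classical
  have hc' : c ∈ (Icc 1 n).erase a := Finset.mem_erase.2 ⟨hac.symm, hc⟩
  have hsplit : ∀ f : ℕ → ℝ[X], ∏ i ∈ Icc 1 n, f i =
      (∏ i ∈ ((Icc 1 n).erase a).erase c, f i) * (f a * f c) := fun f => by
    rw [← Finset.mul_prod_erase _ f ha, ← Finset.mul_prod_erase _ f hc']
    ring
  have hrest : ∏ i ∈ ((Icc 1 n).erase a).erase c, q (moveBox ν a c i) =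
      ∏ i ∈ ((Icc 1 n).erase a).erase c, q (ν i) := Finset.prod_congr rfl fun i hi => by
    simp only [Finset.mem_erase] at hi
    simp [moveBox, hi.1, hi.2.1]
  rw [hsplit, hsplit, hrest]
  refine coeff_mul_le_mul_left (coeff_prod_nonneg _ _ fun i _ => hq0 _) (fun j => ?_) j
  obtain ⟨l, hl⟩ : ∃ l, ν c = l + 1 := ⟨ν c - 1, by omega⟩
  simp only [moveBox, if_neg hac.symm, hl, Nat.add_sub_cancel, ↓reduceIte]
  exact hq _ _ (by omega) j

theorem coeff_prod_le_of_dominates (hq0 : ∀ m j, 0 ≤ (q m).coeff j)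
    (hq : ∀ k l, l < k → ∀ j, (q (k + 1) * q l).coeff j ≤ (q k * q (l + 1)).coeff j)
    {lam mu : ℕ → ℕ} {n : ℕ} (hlam : AntitoneOn lam (Set.Icc 1 n))
    (hmu : AntitoneOn mu (Set.Icc 1 n)) (hdom : ∀ j ≤ n, partialSum mu j ≤ partialSum lam j)
    (htot : partialSum mu n = partialSum lam n) (j : ℕ) :
    (∏ i ∈ Icc 1 n, q (lam i)).coeff j ≤ (∏ i ∈ Icc 1 n, q (mu i)).coeff j := by
  obtain ⟨d, hd⟩ : ∃ d, ∑ k ∈ Icc 1 n, (partialSum lam k - partialSum mu k) = d := ⟨_, rfl⟩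
  induction d using Nat.strong_induction_on generalizing mu j with
  | _ d ih =>
    by_cases hlt : ∃ k ≤ n, partialSum mu k < partialSum lam k
    · obtain ⟨a, c, ha1, hac, hcn, hc1, hrowa, hrowc, hbetween⟩ :=
        exists_moveBox hlam hmu hdom htot hlt
      have hsum := partialSum_moveBox (ν := mu) ha1 hac hc1
      have ha : a ∈ Icc 1 n := Finset.mem_Icc.2 ⟨ha1, by omega⟩
      have hc : c ∈ Icc 1 n := Finset.mem_Icc.2 ⟨by omega, hcn⟩
      refine le_trans ?_ (coeff_prod_moveBox_le hq0 hq ha hc hac.ne hc1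
        (hmu (Finset.mem_Icc.1 ha) (Finset.mem_Icc.1 hc) hac.le) j)
      refine ih _ ?_ (antitoneOn_moveBox hmu ha1 hac hcn hc1 hrowa hrowc) (fun k hk => ?_) ?_ j rfl
      · rw [← hd]
        refine Finset.sum_lt_sum (fun k _ => ?_) ⟨a, ha, ?_⟩
        · have := hsum k; split_ifs at this <;> omega
        · have := hsum a; have := hbetween a le_rfl hac; split_ifs at * <;> omega
      · have := hsum k; have := hbetween k; have := hdom k hk; split_ifs at * <;> omega
      · have := hsum n; split_ifs at this <;> omega
    · simp only [not_exists, not_and, not_lt] at hlt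
      have heq := eq_of_partialSum_eq fun k hk => (hdom k hk).antisymm (hlt k hk)
      rw [Finset.prod_congr rfl fun i hi => congrArg q (heq i hi)]

end exchange_order

lemma partialSum_le_of_sum_min_le {lam mu : ℕ → ℕ} {n j : ℕ}
    (hlam : AntitoneOn lam (Set.Icc 1 n)) (hj : j ∈ Set.Icc 1 n)
    (htot : partialSum mu n = partialSum lam n)
    (h : ∑ i ∈ Icc 1 n, min (lam i) (lam j) ≤ ∑ i ∈ Icc 1 n, min (mu i) (lam j)) :
    partialSum mu j ≤ partialSum lam j := by
  have hlamL : ∑ i ∈ Icc 1 j, min (lam i) (lam j) = ∑ i ∈ Icc 1 j, lam j :=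
    Finset.sum_congr rfl fun i hi => by
      rw [Finset.mem_Icc] at hi
      exact min_eq_right (hlam ⟨hi.1, hi.2.trans hj.2⟩ hj hi.2)
  have hlamR : ∑ i ∈ Ioc j n, min (lam i) (lam j) = ∑ i ∈ Ioc j n, lam i :=
    Finset.sum_congr rfl fun i hi => by
      rw [Finset.mem_Ioc] at hi
      exact min_eq_left (hlam hj ⟨by omega, hi.2⟩ hi.1.le)
  have hmuL : ∑ i ∈ Icc 1 j, min (mu i) (lam j) ≤ ∑ i ∈ Icc 1 j, lam j :=
    Finset.sum_le_sum fun _ _ => min_le_right _ _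
  have hmuR : ∑ i ∈ Ioc j n, min (mu i) (lam j) ≤ ∑ i ∈ Ioc j n, mu i :=
    Finset.sum_le_sum fun _ _ => min_le_left _ _
  unfold partialSum at htot ⊢
  rw [sum_Icc_one_eq_sum_Icc_add_sum_Ioc _ hj.2, sum_Icc_one_eq_sum_Icc_add_sum_Ioc _ hj.2]
    at h htot
  omega

namespace PartitionSeq

lemma weight_eq_partialSum (lam : PartitionSeq) {j : ℕ} (hj : ∀ i, j < i → lam.part i = 0) :
    lam.weight = partialSum lam.part j := by
  refine finsum_eq_sum_of_support_subset _ fun i hi => ?_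
  have h0 : i ≠ 0 := by rintro rfl; exact hi lam.zero
  simp only [Finset.coe_Icc, Set.mem_Icc]
  exact ⟨Nat.one_le_iff_ne_zero.2 h0, not_lt.1 fun h => hi (hj i h)⟩

lemma part_eq_zero_of_weight_lt (lam : PartitionSeq) {i : ℕ} (hi : lam.weight < i) :
    lam.part i = 0 := by
  by_contra hne
  obtain ⟨K, hK⟩ := lam.finSupp.bddAbove
  have hw := lam.weight_eq_partialSum (j := max i K) fun k hk => by
    by_contra h
    exact absurd (hK h) (by simp only [not_le]; omega)
  have hi1 : 1 ≤ i := Nat.one_le_iff_ne_zero.2 fun h => hne (h ▸ lam.zero)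
  have : i ≤ partialSum lam.part i := calc
    i = ∑ _k ∈ Icc 1 i, 1 := by simp
    _ ≤ _ := Finset.sum_le_sum fun k hk => by
      rw [Finset.mem_Icc] at hk
      exact Nat.one_le_iff_ne_zero.2 fun h =>
        hne (Nat.eq_zero_of_le_zero (h ▸ lam.antitone hk.1 hk.2))
  have : partialSum lam.part i ≤ partialSum lam.part (max i K) :=
    Finset.sum_le_sum_of_subset (Finset.Icc_subset_Icc_right (le_max_left _ _))
  omega

lemma partialSum_eq_of_weight_eq (lam : PartitionSeq) {n j : ℕ} (hn : lam.weight = n)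
    (hj : n ≤ j) : partialSum lam.part j = n :=
  hn ▸ (lam.weight_eq_partialSum fun _ hi => lam.part_eq_zero_of_weight_lt (by omega)).symm

lemma antitoneOn_part (lam : PartitionSeq) (n : ℕ) : AntitoneOn lam.part (Set.Icc 1 n) :=
  fun _ hi _ _ hij => lam.antitone hi.1 hij

lemma fPoly_eq_prod {lam : PartitionSeq} {n : ℕ} (hn : lam.weight = n) (p : ℕ → ℝ) (t : ℕ) :
    fPoly lam p t = ∏ i ∈ Icc 1 n, PowerSeries.trunc (t + 1) (PowerSeries.mk p ^ lam.part i) := by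
  refine finprod_eq_prod_of_mulSupport_subset _ fun i hi => ?_
  simp only [Finset.coe_Icc, Set.mem_Icc]
  by_contra h
  have : lam.part i = 0 := by
    rcases Nat.eq_zero_or_pos i with rfl | hi1
    · exact lam.zero
    · exact lam.part_eq_zero_of_weight_lt (by omega)
  exact hi (by simp only [this, pow_zero, PowerSeries.trunc_one])

lemma dominates_iff {lam mu : PartitionSeq} {n : ℕ} (hl : lam.weight = n) (hm : mu.weight = n) :
    lam.Dominates mu ↔ ∀ j ≤ n, partialSum mu.part j ≤ partialSum lam.part j := by
  refine ⟨fun h j _ => ?_, fun h => ⟨hl.trans hm.symm, fun j _ => ?_⟩⟩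
  · rcases Nat.eq_zero_or_pos j with rfl | hj
    · exact le_rfl
    · exact h.2 j hj
  · rcases le_total j n with hj | hj
    · exact h j hj
    · exact (mu.partialSum_eq_of_weight_eq hm hj).trans_le
        (lam.partialSum_eq_of_weight_eq hl hj).ge

end PartitionSeq

theorem dominance_iff_condC_general (p : ℕ → ℝ) (hnn : ∀ n, 0 ≤ p n)
    (r : ℕ) (hr : 1 ≤ r) (hrange : ∀ n, p n ≠ 0 ↔ n ≤ r)
    (hTN : IsTN 2 (toeplitz p)) :
    ∀ n : ℕ, ∀ lam mu : PartitionSeq, lam.weight = n → mu.weight = n →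
      (lam.Dominates mu ↔ CondC p lam mu) := by
  intro n lam mu hl hm
  have hF0 : ∀ k, 0 ≤ PowerSeries.coeff k (PowerSeries.mk p) := by simpa using hnn
  have hFr : ∀ k, r < k → PowerSeries.coeff k (PowerSeries.mk p) = 0 := fun k hk => by
    simpa using mt (hrange k).1 (by omega)
  have hFpos : ∀ k ≤ r, 0 < PowerSeries.coeff k (PowerSeries.mk p) := fun k hk => by
    simpa using (hnn k).lt_of_ne' ((hrange k).2 hk)
  have htot : partialSum mu.part n = partialSum lam.part n := by
    rw [mu.partialSum_eq_of_weight_eq hm le_rfl, lam.partialSum_eq_of_weight_eq hl le_rfl]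
  rw [PartitionSeq.dominates_iff hl hm]
  simp only [CondC, probE, PartitionSeq.fPoly_eq_prod hl, PartitionSeq.fPoly_eq_prod hm]
  constructor
  · intro hdom j t
    exact coeff_prod_le_of_dominates (fun m j => coeff_trunc_pow_nonneg hF0 m t j)
      (fun k l hlk j => coeff_trunc_pow_mul_le hF0 (isPF2_of_isTN_toeplitz hTN) hlk t j)
      (lam.antitoneOn_part n) (mu.antitoneOn_part n) hdom htot j
  · intro hC j hj
    rcases Nat.eq_zero_or_pos j with rfl | hj1
    · exact le_rfl
    exact partialSum_le_of_sum_min_le (lam.antitoneOn_part n) ⟨hj1, hj⟩ htot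
      (sum_min_le_of_coeff_prod_le hr hF0 hFr hFpos _ _ _ _ fun i => hC i (r * lam.part j))

/-- **Theorem (main 1).** If `X` is an ℕ-valued random variable with `X ∈ TN₂`
and `range(X) = {0,1,…,r}` for some positive integer `r`, then for all `n ∈ ℕ`
and partitions `λ, μ` of `n`, `λ ⊵ μ` iff `C(λ,μ,X)`. -/
theorem dominance_iff_condC (p : ℕ → ℝ) (hnn : ∀ n, 0 ≤ p n) (hsum : HasSum p 1)
    (r : ℕ) (hr : 1 ≤ r) (hrange : ∀ n, p n ≠ 0 ↔ n ≤ r)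
    (hTN : IsTN 2 (toeplitz p)) :
    ∀ n : ℕ, ∀ lam mu : PartitionSeq, lam.weight = n → mu.weight = n →
      (lam.Dominates mu ↔ CondC p lam mu) :=
  dominance_iff_condC_general p hnn r hr hrange hTN
end
end

section
/- Suppose that for all integers A, a, B, b with A ≥ B ≥ 0 and a ≥ b ≥ 0 there is an injection γ : U^A_b × U^B_a → U^A_a × U^B_b such that for all (λ₁,μ₁) ∈ U^A_b × U^B_a, the image (λ₂,μ₂) = γ(λ₁,μ₁) satisfies λ₁μ₁ ⊵ λ₂μ₂ (concatenations, compared in the dominance order). Then for every sequence p = {p_n}_{n=0}^∞ of real numbers, if the Toeplitz matrix T_p is TN_2 then the matrix S_p is TN_2. -/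
open Finset

noncomputable section

/-- `f ⊵ g` for compositions with `m` non-negative parts: the non-increasing
rearrangements have equal total sums and the partial sums of the rearrangement
of `f` dominate those of `g`. -/
def CompDominates {m : ℕ} (f g : Fin m → ℕ) : Prop :=
  ∃ σ τ : Equiv.Perm (Fin m), Antitone (f ∘ σ) ∧ Antitone (g ∘ τ) ∧
    (∑ i, f i = ∑ i, g i) ∧
    ∀ j : ℕ, j ≤ m →
      ∑ i ∈ Finset.univ.filter (fun i : Fin m => (i : ℕ) < j), g (τ i) ≤
        ∑ i ∈ Finset.univ.filter (fun i : Fin m => (i : ℕ) < j), f (σ i)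

/-! Expanding `(p^A)_b (p^B)_a` as a sum over `U^A_b × U^B_a` of `∏ p (λ₁μ₁ i)`, the
injection `γ` sends each term to a term of `(p^A)_a (p^B)_b` that is at least as large,
because `λ ⊵ μ` forces `∏ p (λ i) ≤ ∏ p (μ i)` for a Pólya frequency sequence `p` of order
two (which is what `T_p ∈ TN₂` says). The latter follows by Robin Hood transfers: if `k` is
the first part where `λ` falls short of the non-increasing `μ`, some earlier part `j` exceeds
`μ`, and moving one unit from `j` to `k` keeps `λ ⊵ μ`, brings `λ` closer to `μ`, and by
log-concavity does not decrease the product. -/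

open Function

theorem isTN_two_iff {M : Matrix ℕ ℕ ℝ} :
    IsTN 2 M ↔ (∀ i j, 0 ≤ M i j) ∧
      ∀ ⦃i i' j j' : ℕ⦄, i < i' → j < j' → M i' j * M i j' ≤ M i j * M i' j' := by
  constructor
  · intro h
    refine ⟨fun i j => ?_, fun i i' j j' hi hj => ?_⟩
    · have h1 := h 1 (by norm_num) ![i] ![j] (Subsingleton.strictMono _)
        (Subsingleton.strictMono _)
      rwa [Matrix.det_fin_one] at h1
    · have h2 := h 2 le_rfl ![i, i'] ![j, j'] (by simp [Fin.strictMono_iff_lt_succ, hi])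
        (by simp [Fin.strictMono_iff_lt_succ, hj])
      rw [Matrix.det_fin_two] at h2
      simp only [Matrix.submatrix_apply, Matrix.cons_val_zero, Matrix.cons_val_one] at h2
      linarith
  · rintro ⟨h1, h2⟩ l hl r c hr hc
    interval_cases l
    · simp
    · simpa [Matrix.det_fin_one] using h1 _ _
    · have := h2 (hr Fin.zero_lt_one) (hc Fin.zero_lt_one)
      rw [Matrix.det_fin_two]
      simp only [Matrix.submatrix_apply]
      linarith

/-- Pólya frequency of order two: non-negative and log-concave without internal zeros. -/
structure IsPF2_s12 (p : ℕ → ℝ) : Prop where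
  nonneg : ∀ n, 0 ≤ p n
  mul_le : ∀ ⦃u v⦄, v < u → p (u + 1) * p v ≤ p u * p (v + 1)

theorem IsPF2_s12.of_isTN_toeplitz {p : ℕ → ℝ} (h : IsTN 2 (toeplitz p)) : IsPF2_s12 p where
  nonneg n := by simpa [toeplitz] using (isTN_two_iff.1 h).1 0 n
  mul_le u v huv := by
    have := (isTN_two_iff.1 h).2 zero_lt_one (by omega : v + 1 < u + 1)
    simp only [toeplitz, le_add_iff_nonneg_left, zero_le, if_true, add_tsub_cancel_right,
      tsub_zero] at this
    linarith

section Transfer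

variable {ι : Type*} [DecidableEq ι]

def transfer (F : ι → ℕ) (j k : ι) : ι → ℕ :=
  update (update F j (F j - 1)) k (F k + 1)

variable {F : ι → ℕ} {j k : ι}

theorem transfer_apply_left (hjk : j ≠ k) : transfer F j k j = F j - 1 := by
  simp [transfer, hjk]

theorem transfer_apply_right : transfer F j k k = F k + 1 := by
  simp [transfer]

theorem transfer_apply_of_ne {i : ι} (hij : i ≠ j) (hik : i ≠ k) : transfer F j k i = F i := by
  simp [transfer, hij, hik]

theorem sum_transfer_add (hjk : j ≠ k) (hj : 1 ≤ F j) (s : Finset ι) :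
    ∑ i ∈ s, transfer F j k i + (if j ∈ s then 1 else 0) =
      ∑ i ∈ s, F i + (if k ∈ s then 1 else 0) := by
  rw [← sum_ite_eq' s j (fun _ => 1), ← sum_ite_eq' s k (fun _ => 1), ← sum_add_distrib,
    ← sum_add_distrib]
  refine sum_congr rfl fun i _ => ?_
  obtain rfl | hij := eq_or_ne i j
  · simp only [transfer_apply_left hjk, if_true, hjk, if_false, add_zero]; omega
  obtain rfl | hik := eq_or_ne i k
  · simp [transfer_apply_right, hij]
  · simp [transfer_apply_of_ne hij hik, hij, hik]

theorem sum_tsub_transfer_add_one [Fintype ι] {G : ι → ℕ} (hjk : j ≠ k)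
    (hj : G j < F j) (hk : F k < G k) :
    ∑ i, (transfer F j k i - G i) + 1 = ∑ i, (F i - G i) := by
  have hone : ∑ i, (if i = j then 1 else 0) = 1 := by simp
  rw [← hone, ← sum_add_distrib]
  refine sum_congr rfl fun i _ => ?_
  obtain rfl | hij := eq_or_ne i j
  · simp only [transfer_apply_left hjk, if_true]; omega
  obtain rfl | hik := eq_or_ne i k
  · simp only [transfer_apply_right, hij, if_false, add_zero]; omega
  · simp [transfer_apply_of_ne hij hik, hij]

theorem IsPF2_s12.prod_le_prod_transfer [Fintype ι] {p : ℕ → ℝ} (hp : IsPF2_s12 p) (hjk : j ≠ k)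
    (h : F k + 2 ≤ F j) :
    ∏ i, p (F i) ≤ ∏ i, p (transfer F j k i) := by
  have hsplit : ∀ H : ι → ℕ, ∏ i, p (H i) =
      (∏ i ∈ univ \ {j, k}, p (H i)) * (p (H j) * p (H k)) := fun H => by
    rw [← prod_pair hjk (f := fun i => p (H i)), prod_sdiff (subset_univ _)]
  have hrest : ∏ i ∈ univ \ {j, k}, p (transfer F j k i) = ∏ i ∈ univ \ {j, k}, p (F i) :=
    prod_congr rfl fun i hi => by
      simp only [mem_sdiff, mem_insert, mem_singleton, not_or] at hi
      rw [transfer_apply_of_ne hi.2.1 hi.2.2]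
  rw [hsplit F, hsplit (transfer F j k), hrest, transfer_apply_left hjk, transfer_apply_right]
  refine mul_le_mul_of_nonneg_left ?_ (prod_nonneg fun i _ => hp.nonneg _)
  obtain ⟨u, hu⟩ : ∃ u, F j = u + 1 := ⟨F j - 1, by omega⟩
  rw [hu, Nat.add_sub_cancel]
  exact hp.mul_le (by omega)

end Transfer

section Majorization

variable {m : ℕ}

def prefixSum (F : Fin m → ℕ) (l : ℕ) : ℕ :=
  ∑ i ∈ univ.filter (fun i : Fin m => (i : ℕ) < l), F i

theorem prefixSum_le_transfer {F G : Fin m → ℕ} {j k : Fin m} (hjk : j < k) (hj : G j < F j)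
    (hbefore : ∀ i < k, G i ≤ F i) {l : ℕ} (hl : prefixSum G l ≤ prefixSum F l) :
    prefixSum G l ≤ prefixSum (transfer F j k) l := by
  have h := sum_transfer_add hjk.ne (by omega : 1 ≤ F j)
    (univ.filter fun i : Fin m => (i : ℕ) < l)
  simp only [mem_filter, mem_univ, true_and] at h
  by_cases hjl : (j : ℕ) < l
  · by_cases hkl : (k : ℕ) < l
    · simp only [hjl, hkl, if_true] at h
      exact hl.trans_eq (by unfold prefixSum; omega)
    · have hlt : prefixSum G l < prefixSum F l := by
        refine sum_lt_sum (fun i hi => hbefore i ?_) ⟨j, by simpa using hjl, hj⟩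
        simp only [mem_filter, mem_univ, true_and] at hi
        exact Fin.lt_def.2 (by omega)
      simp only [hjl, hkl, if_true, if_false] at h
      unfold prefixSum at hlt ⊢
      omega
  · simp only [hjl, if_false] at h
    unfold prefixSum at hl ⊢
    omega

theorem prod_le_prod_of_prefixSum_le {p : ℕ → ℝ} (hp : IsPF2_s12 p) {F G : Fin m → ℕ}
    (hG : Antitone G) (hsum : ∑ i, F i = ∑ i, G i)
    (hdom : ∀ l ≤ m, prefixSum G l ≤ prefixSum F l) :
    ∏ i, p (F i) ≤ ∏ i, p (G i) := by
  induction hn : ∑ i, (F i - G i) generalizing F with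
  | zero =>
    have hle : ∀ i ∈ univ, F i ≤ G i := fun i hi =>
      Nat.sub_eq_zero_iff_le.1 (sum_eq_zero_iff.1 hn i hi)
    have heq := (sum_eq_sum_iff_of_le hle).1 hsum
    exact (prod_congr rfl fun i hi => by rw [heq i hi]).le
  | succ n ih =>
    have hk : ∃ k, F k < G k := by
      by_contra! hGF
      obtain ⟨i, -, hi⟩ := exists_ne_zero_of_sum_ne_zero (hn.trans_ne n.succ_ne_zero)
      exact (sum_lt_sum (fun i _ => hGF i) ⟨i, mem_univ i, by omega⟩).ne hsum.symm
    obtain ⟨k, hkFG, hkmin⟩ := exists_minimal_of_wellFoundedLT _ hk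
    have hbefore : ∀ i < k, G i ≤ F i := fun i hi =>
      not_lt.1 fun h => absurd (hkmin h hi.le) (not_le.2 hi)
    obtain ⟨j, hjk, hjGF⟩ : ∃ j < k, G j < F j := by
      by_contra! hFG
      refine not_lt_of_ge (hdom (k + 1) k.2) (sum_lt_sum (fun i hi => ?_) ⟨k, by simp, hkFG⟩)
      rcases Fin.lt_or_eq_of_le (by simpa [Nat.lt_succ_iff] using hi : i ≤ k) with h | rfl
      · exact hFG i h
      · exact hkFG.le
    have hFjk : F k + 2 ≤ F j := by have := hG hjk.le; omega
    refine (hp.prod_le_prod_transfer hjk.ne hFjk).trans (ih ?_ ?_ ?_)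
    · have := sum_transfer_add hjk.ne (by omega : 1 ≤ F j) univ
      simp only [mem_univ, if_true] at this
      omega
    · exact fun l hl => prefixSum_le_transfer hjk hjGF hbefore (hdom l hl)
    · have := sum_tsub_transfer_add_one hjk.ne hjGF hkFG
      omega

theorem CompDominates.prod_le_prod {p : ℕ → ℝ} (hp : IsPF2_s12 p) {f g : Fin m → ℕ}
    (h : CompDominates f g) : ∏ i, p (f i) ≤ ∏ i, p (g i) := by
  obtain ⟨σ, τ, -, hg, hsum, hdom⟩ := h
  rw [← Equiv.prod_comp σ (fun i => p (f i)), ← Equiv.prod_comp τ (fun i => p (g i))]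
  exact prod_le_prod_of_prefixSum_le hp hg (by rwa [Equiv.sum_comp σ f, Equiv.sum_comp τ g]) hdom

end Majorization

instance (m n : ℕ) : Fintype {f : Fin m → ℕ // ∑ i, f i = n} :=
  Fintype.subtype (piAntidiag univ n) (by simp)

theorem sMatrix_eq_sum (p : ℕ → ℝ) (m n : ℕ) :
    sMatrix p m n = ∑ f : {f : Fin m → ℕ // ∑ i, f i = n}, ∏ i, p (f.1 i) := by
  rw [sMatrix, ← Fin.prod_const, PowerSeries.coeff_prod, finsuppAntidiag, sum_map]
  simp only [PowerSeries.coeff_mk]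
  exact (sum_attach _ (fun f : Fin m → ℕ => ∏ i, p (f i))).trans (sum_subtype _ (by simp) _)

theorem sMatrix_mul_sMatrix_eq_sum (p : ℕ → ℝ) (A B a b : ℕ) :
    sMatrix p A a * sMatrix p B b =
      ∑ x : {f : Fin A → ℕ // ∑ i, f i = a} × {g : Fin B → ℕ // ∑ i, g i = b},
        ∏ i, p (Fin.append x.1.1 x.2.1 i) := by
  simp only [sMatrix_eq_sum, Fintype.sum_mul_sum, Fintype.sum_prod_type, Fin.prod_univ_add,
    Fin.append_left, Fin.append_right]

theorem sMatrix_mul_le_of_injective {p : ℕ → ℝ} (hp : IsPF2_s12 p) {A B a b : ℕ}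
    (γ : ({f : Fin A → ℕ // ∑ i, f i = b} × {g : Fin B → ℕ // ∑ i, g i = a}) →
      ({f : Fin A → ℕ // ∑ i, f i = a} × {g : Fin B → ℕ // ∑ i, g i = b}))
    (hγ : Injective γ)
    (hdom : ∀ x, CompDominates (Fin.append x.1.1 x.2.1) (Fin.append (γ x).1.1 (γ x).2.1)) :
    sMatrix p A b * sMatrix p B a ≤ sMatrix p A a * sMatrix p B b := by
  rw [sMatrix_mul_sMatrix_eq_sum, sMatrix_mul_sMatrix_eq_sum]
  calc _ ≤ ∑ x, ∏ i, p (Fin.append (γ x).1.1 (γ x).2.1 i) :=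
        sum_le_sum fun x _ => (hdom x).prod_le_prod hp
    _ = ∑ y ∈ univ.map ⟨γ, hγ⟩, ∏ i, p (Fin.append y.1.1 y.2.1 i) := by
        rw [sum_map]; rfl
    _ ≤ _ := sum_le_sum_of_subset_of_nonneg (subset_univ _)
        fun y _ _ => prod_nonneg fun i _ => hp.nonneg _

/-- **Theorem.** The combinatorial conjecture (existence, for all
`A ≥ B ≥ 0`, `a ≥ b ≥ 0`, of an injection `γ : U^A_b × U^B_a ↪ U^A_a × U^B_b`
with `λ₁μ₁ ⊵ γ(λ₁,μ₁)` as concatenations) implies the case `k = 2` of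
Theorem 3: `T_p ∈ TN₂ → S_p ∈ TN₂`. -/
theorem conjecture_implies_TN2_case
    (hconj : ∀ A B a b : ℕ, B ≤ A → b ≤ a →
      ∃ γ : ({f : Fin A → ℕ // ∑ i, f i = b} × {g : Fin B → ℕ // ∑ i, g i = a}) →
            ({f : Fin A → ℕ // ∑ i, f i = a} × {g : Fin B → ℕ // ∑ i, g i = b}),
        Function.Injective γ ∧
        ∀ x, CompDominates (Fin.append x.1.1 x.2.1)
              (Fin.append (γ x).1.1 (γ x).2.1)) :
    ∀ p : ℕ → ℝ, IsTN 2 (toeplitz p) → IsTN 2 (sMatrix p) := by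
  intro p hT
  have hp := IsPF2_s12.of_isTN_toeplitz hT
  refine isTN_two_iff.2 ⟨fun i j => ?_, fun B A b a hBA hba => ?_⟩
  · rw [sMatrix_eq_sum]
    exact sum_nonneg fun f _ => prod_nonneg fun i _ => hp.nonneg _
  · obtain ⟨γ, hγ, hdom⟩ := hconj A B a b hBA.le hba.le
    simpa only [mul_comm (sMatrix p B b)] using sMatrix_mul_le_of_injective hp γ hγ hdom
end
end

section
/- Let X be an ℕ-valued random variable that is TN_2. Then for all partitions λ and μ, if λ dominates μ then condition C(λ,μ,X) holds. -/
open Finset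

noncomputable section

open PowerSeries Relation
open scoped Polynomial

/-!
If `p` is TN₂, multiplying by `p(x)` preserves the likelihood ratio order of coefficient
sequences (a 2×2 Cauchy–Binet argument), so `F = p^a` dominates `G = p^b` in that order when
`b ≤ a`. The coefficient of `x^j` in `(F p|_t)(G|_t)` and in `(F|_t)(G p|_t)` is
`Σ_k p_k Σ_{u+v=j-k} F_u G_v`, restricted to the windows `u + k ≤ t, v ≤ t` and
`u ≤ t, v + k ≤ t` respectively; pairing `(u, v)` with `(v, u)`, the ratio order makes the
first sum the smaller. So moving one unit from a row to a strictly shorter row increases every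
coefficient of `∏_i (p^{λ(i)}|_t)`, all factors having nonnegative coefficients. Finally, if
`λ ⊵ μ` then `μ` is reached from `λ` by such Robin Hood moves.
-/

lemma sum_le_sum_of_add_swap_le {α : Type*} [LinearOrder α] {s : Finset (α × α)}
    (hs : ∀ x ∈ s, x.swap ∈ s) {f g : α × α → ℝ}
    (h : ∀ x ∈ s, x.2 ≤ x.1 → f x + f x.swap ≤ g x + g x.swap) :
    ∑ x ∈ s, f x ≤ ∑ x ∈ s, g x := by
  have swap_sum : ∀ φ : α × α → ℝ, ∑ x ∈ s, φ x.swap = ∑ x ∈ s, φ x := fun φ =>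
    sum_nbij' Prod.swap Prod.swap hs hs (by simp) (by simp) (by simp)
  have hpair : ∑ x ∈ s, (f x + f x.swap) ≤ ∑ x ∈ s, (g x + g x.swap) := by
    refine sum_le_sum fun x hx => ?_
    rcases le_total x.2 x.1 with hle | hle
    · exact h x hx hle
    · simpa only [Prod.swap_swap, add_comm] using h x.swap (hs x hx) hle
  rw [sum_add_distrib, sum_add_distrib, swap_sum f, swap_sum g] at hpair
  linarith

lemma sum_antidiagonal_antidiagonal_fst {M : Type*} [AddCommMonoid M] (j : ℕ)
    (f : ℕ → ℕ → ℕ → M) :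
    ∑ x ∈ antidiagonal j, ∑ y ∈ antidiagonal x.1, f y.1 y.2 x.2 =
      ∑ x ∈ antidiagonal j, ∑ y ∈ antidiagonal x.2, f y.1 x.1 y.2 := by
  simp only [sum_sigma']
  refine sum_nbij' (fun x => ⟨(x.2.2, x.2.1 + x.1.2), (x.2.1, x.1.2)⟩)
    (fun x => ⟨(x.2.1 + x.1.1, x.2.2), (x.2.1, x.1.1)⟩) ?_ ?_ ?_ ?_ ?_ <;>
    aesop (add simp [add_assoc, add_comm, add_left_comm])

lemma coeff_trunc_mul_trunc_s14 {R : Type*} [Semiring R] (A B : R⟦X⟧) (t j : ℕ) :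
    (trunc (t + 1) A * trunc (t + 1) B).coeff j =
      ∑ x ∈ antidiagonal j,
        if x.1 ≤ t ∧ x.2 ≤ t then coeff x.1 A * coeff x.2 B else 0 := by
  simp only [Polynomial.coeff_mul, coeff_trunc, Nat.lt_succ_iff, ite_and, ite_mul, zero_mul,
    mul_ite, mul_zero]
  refine sum_congr rfl fun x _ => ?_
  split_ifs <;> rfl

lemma coeff_trunc_mul_mk_mul_trunc {R : Type*} [CommSemiring R] (F G : R⟦X⟧) (p : ℕ → R)
    (t j : ℕ) :
    (trunc (t + 1) (F * mk p) * trunc (t + 1) G).coeff j =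
      ∑ x ∈ antidiagonal j, p x.1 * ∑ y ∈ antidiagonal x.2,
        if y.1 + x.1 ≤ t ∧ y.2 ≤ t then coeff y.1 F * coeff y.2 G else 0 := by
  rw [coeff_trunc_mul_trunc_s14]
  simp only [mul_sum]
  rw [← sum_antidiagonal_antidiagonal_fst j
    (fun a k b => p k * if a + k ≤ t ∧ b ≤ t then coeff a F * coeff b G else 0)]
  refine sum_congr rfl fun x _ => ?_
  rw [coeff_mul, sum_mul]
  split_ifs with hx
  · refine sum_congr rfl fun y hy => ?_
    rw [mem_antidiagonal.1 hy, if_pos hx, coeff_mk]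
    ring
  · refine (sum_eq_zero fun y hy => ?_).symm
    rw [mem_antidiagonal.1 hy, if_neg hx, mul_zero]

lemma IsTN.antidiag_mul_le_diag_mul {M : Matrix ℕ ℕ ℝ} (hM : IsTN 2 M) {k l v u : ℕ}
    (hkl : k ≤ l) (hvu : v ≤ u) : M l v * M k u ≤ M k v * M l u := by
  rcases hkl.eq_or_lt with rfl | hkl
  · exact le_rfl
  rcases hvu.eq_or_lt with rfl | hvu
  · exact (mul_comm _ _).le
  have hdet := hM 2 le_rfl ![k, l] ![v, u] (Fin.strictMono_iff_lt_succ.2 (by simpa))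
    (Fin.strictMono_iff_lt_succ.2 (by simpa))
  rw [Matrix.det_fin_two] at hdet
  simp only [Matrix.submatrix_apply, Matrix.cons_val_zero, Matrix.cons_val_one] at hdet
  linarith

lemma coeff_mul_mk_eq_sum_toeplitz (F : ℝ⟦X⟧) (p : ℕ → ℝ) {u N : ℕ} (h : u < N) :
    coeff u (F * mk p) = ∑ l ∈ range N, coeff l F * toeplitz p l u := by
  rw [coeff_mul, Nat.sum_antidiagonal_eq_sum_range_succ_mk,
    ← sum_subset (range_subset_range.2 h)]
  · refine sum_congr rfl fun l hl => ?_
    simp [toeplitz, Nat.lt_succ_iff.1 (mem_range.1 hl)]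
  · intro l _ hl
    simp [toeplitz, Nat.lt_succ_iff.not.1 (mem_range.not.1 hl)]

/-- `F` dominates `G` in the likelihood ratio order: `coeff u F / coeff u G` is nondecreasing
in `u` (stated without division). -/
def LRGe (F G : ℝ⟦X⟧) : Prop :=
  ∀ ⦃v u : ℕ⦄, v ≤ u → coeff v F * coeff u G ≤ coeff u F * coeff v G

lemma LRGe.mul_mk {p : ℕ → ℝ} (hTN : IsTN 2 (toeplitz p)) {F G : ℝ⟦X⟧} (h : LRGe F G) :
    LRGe (F * mk p) (G * mk p) := by
  intro v u hvu
  have hv : v < u + 1 := Nat.lt_succ_of_le hvu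
  simp only [coeff_mul_mk_eq_sum_toeplitz _ p hv, coeff_mul_mk_eq_sum_toeplitz _ p u.lt_succ_self,
    sum_mul_sum, ← sum_product']
  -- pairing `(l, k)` with `(k, l)` is the 2×2 Cauchy–Binet expansion of the product minor
  refine sum_le_sum_of_add_swap_le (by simp [and_comm]) fun x _ hx => ?_
  have hFG := h hx
  have hT := hTN.antidiag_mul_le_diag_mul hx hvu
  simp only [Prod.fst_swap, Prod.snd_swap]
  nlinarith [mul_nonneg (sub_nonneg.2 hFG) (sub_nonneg.2 hT)]

lemma lrGe_one {F : ℝ⟦X⟧} (hF : ∀ n, 0 ≤ coeff n F) : LRGe F 1 := by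
  intro v u hvu
  rcases Nat.eq_zero_or_pos u with rfl | hu
  · rw [Nat.le_zero.1 hvu]
  · simp only [coeff_one, if_neg hu.ne', mul_zero]
    split_ifs <;> simp [hF]

lemma coeff_mk_pow_nonneg {p : ℕ → ℝ} (hnn : ∀ n, 0 ≤ p n) (c n : ℕ) :
    0 ≤ coeff n (mk p ^ c) := by
  induction c generalizing n with
  | zero => rw [pow_zero, coeff_one]; positivity
  | succ c ih =>
    rw [pow_succ, coeff_mul]
    exact sum_nonneg fun x _ => mul_nonneg (ih x.1) (by simpa using hnn x.2)

lemma lrGe_mk_pow_of_le {p : ℕ → ℝ} (hnn : ∀ n, 0 ≤ p n) (hTN : IsTN 2 (toeplitz p))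
    {a b : ℕ} (hba : b ≤ a) : LRGe (mk p ^ a) (mk p ^ b) := by
  obtain ⟨d, rfl⟩ := Nat.exists_eq_add_of_le hba
  clear hba
  induction b with
  | zero => simpa using lrGe_one (coeff_mk_pow_nonneg hnn d)
  | succ b ih =>
    rw [Nat.add_right_comm, pow_succ, pow_succ]
    exact ih.mul_mk hTN

lemma LRGe.coeff_trunc_mul_mk_mul_trunc_le {p : ℕ → ℝ} (hnn : ∀ n, 0 ≤ p n)
    {F G : ℝ⟦X⟧} (h : LRGe F G) (t j : ℕ) :
    (trunc (t + 1) (F * mk p) * trunc (t + 1) G).coeff j ≤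
      (trunc (t + 1) F * trunc (t + 1) (G * mk p)).coeff j := by
  rw [mul_comm (trunc (t + 1) F), coeff_trunc_mul_mk_mul_trunc, coeff_trunc_mul_mk_mul_trunc]
  refine sum_le_sum fun x _ => mul_le_mul_of_nonneg_left ?_ (hnn x.1)
  -- for `y.2 ≤ y.1` the truncation window of `y` lies inside that of `y.swap`
  refine sum_le_sum_of_add_swap_le (fun y hy => by simpa [add_comm] using hy) fun y _ hy => ?_
  have hFG := h hy
  simp only [Prod.fst_swap, Prod.snd_swap]
  split_ifs <;> first | (exfalso; omega) | nlinarith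

lemma sum_mul_add_single_eq {ι : Type*} [DecidableEq ι] {g g' : ι → ℕ} {r s : ι}
    (h : g' + Pi.single r 1 = g + Pi.single s 1) (w : ι → ℕ) (T : Finset ι) :
    ∑ i ∈ T, w i * g' i + (if r ∈ T then w r else 0) =
      ∑ i ∈ T, w i * g i + (if s ∈ T then w s else 0) := by
  have := congrArg (fun f => ∑ i ∈ T, w i * f i) h
  simpa [mul_add, sum_add_distrib, Pi.single_apply] using this

/-- `g'` arises from `g` by moving one unit from the part `r` to a strictly smaller part `s`. -/
def RobinHoodMove (S : Finset ℕ) (g g' : ℕ → ℕ) : Prop :=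
  ∃ r ∈ S, ∃ s ∈ S, g s < g r ∧ g' + Pi.single r 1 = g + Pi.single s 1

structure PrefixDominates (N : ℕ) (g μ : ℕ → ℕ) : Prop where
  eq_of_notMem : ∀ i ∉ Icc 1 N, g i = μ i
  prefix_le : ∀ J, 1 ≤ J → ∑ i ∈ Icc 1 J, μ i ≤ ∑ i ∈ Icc 1 J, g i
  sum_eq : ∑ i ∈ Icc 1 N, g i = ∑ i ∈ Icc 1 N, μ i

namespace PrefixDominates

variable {N : ℕ} {g μ : ℕ → ℕ}

lemma exists_transfer (hd : PrefixDominates N g μ) (hne : g ≠ μ) :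
    ∃ r ∈ Icc 1 N, ∃ s ∈ Icc 1 N,
      r < s ∧ μ r < g r ∧ g s < μ s ∧ ∀ i < s, μ i ≤ g i := by
  have mem_of_ne : ∀ i, g i ≠ μ i → i ∈ Icc 1 N := fun i hi => by
    by_contra hout
    exact hi (hd.eq_of_notMem i hout)
  have hpoor : ∃ s, g s < μ s := by
    by_contra! hge
    obtain ⟨i, hi⟩ := Function.ne_iff.1 hne
    have := sum_lt_sum (fun i _ => hge i) ⟨i, mem_of_ne i hi, (hge i).lt_of_ne' hi⟩
    exact this.ne' hd.sum_eq
  obtain ⟨s, hs, hbelow⟩ : ∃ s, g s < μ s ∧ ∀ i < s, μ i ≤ g i :=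
    ⟨Nat.find hpoor, Nat.find_spec hpoor, fun i hi => not_lt.1 (Nat.find_min hpoor hi)⟩
  have hsN := mem_of_ne s hs.ne
  obtain ⟨r, hrs, hr⟩ : ∃ r < s, μ r < g r := by
    by_contra! hle
    have hlt : ∑ i ∈ Icc 1 s, g i < ∑ i ∈ Icc 1 s, μ i := by
      refine sum_lt_sum (fun i hi => ?_) ⟨s, right_mem_Icc.2 (mem_Icc.1 hsN).1, hs⟩
      rcases (mem_Icc.1 hi).2.lt_or_eq with hi | rfl
      · exact hle i hi
      · exact hs.le
    exact hlt.not_ge (hd.prefix_le s (mem_Icc.1 hsN).1)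
  exact ⟨r, mem_of_ne r hr.ne', s, hsN, hrs, hr, hs, hbelow⟩

lemma exists_robinHoodMove (hμ : AntitoneOn μ (Icc 1 N)) (hd : PrefixDominates N g μ)
    (hne : g ≠ μ) :
    ∃ g', RobinHoodMove (Icc 1 N) g g' ∧ PrefixDominates N g' μ ∧
      ∑ i ∈ Icc 1 N, (N - i) * g' i < ∑ i ∈ Icc 1 N, (N - i) * g i := by
  obtain ⟨r, hr, s, hs, hrs, hμr, hgs, hbelow⟩ := hd.exists_transfer hne
  have hsr : g s < g r := hgs.trans ((hμ hr hs hrs.le).trans_lt hμr)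
  have hle : Pi.single r 1 ≤ g + Pi.single s 1 := fun i => by
    rcases eq_or_ne i r with rfl | hi
    · simp only [Pi.single_eq_same, Pi.add_apply]; omega
    · simp [Pi.single_eq_of_ne hi]
  obtain ⟨g', hg'⟩ : ∃ g' : ℕ → ℕ, g' + Pi.single r 1 = g + Pi.single s 1 :=
    ⟨g + Pi.single s 1 - Pi.single r 1, tsub_add_cancel_of_le hle⟩
  have hsum := sum_mul_add_single_eq hg'
  have hrN := mem_Icc.1 hr
  have hsN := mem_Icc.1 hs
  refine ⟨g', ⟨r, hr, s, hs, hsr, hg'⟩, ⟨fun i hi => ?_, fun J hJ => ?_, ?_⟩, ?_⟩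
  · have hir : i ≠ r := fun h => hi (h ▸ hr)
    have his : i ≠ s := fun h => hi (h ▸ hs)
    simpa [Pi.single_eq_of_ne hir, Pi.single_eq_of_ne his, hd.eq_of_notMem i hi]
      using congrFun hg' i
  · have hJ' := hsum (fun _ => 1) (Icc 1 J)
    simp only [one_mul, mem_Icc] at hJ'
    by_cases hmid : r ≤ J ∧ J < s
    · have hstrict : ∑ i ∈ Icc 1 J, μ i < ∑ i ∈ Icc 1 J, g i :=
        sum_lt_sum (fun i hi => hbelow i ((mem_Icc.1 hi).2.trans_lt hmid.2))
          ⟨r, mem_Icc.2 ⟨hrN.1, hmid.1⟩, hμr⟩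
      split_ifs at hJ' <;> omega
    · have := hd.prefix_le J hJ
      split_ifs at hJ' <;> omega
  · have hN := hsum (fun _ => 1) (Icc 1 N)
    simp only [one_mul, if_pos hr, if_pos hs] at hN
    linarith [hd.sum_eq]
  · have hM := hsum (fun i => N - i) (Icc 1 N)
    rw [if_pos hr, if_pos hs] at hM
    omega

theorem reflTransGen_robinHoodMove (hμ : AntitoneOn μ (Icc 1 N))
    (hd : PrefixDominates N g μ) : ReflTransGen (RobinHoodMove (Icc 1 N)) g μ := by
  induction hm : ∑ i ∈ Icc 1 N, (N - i) * g i using Nat.strong_induction_on generalizing g with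
  | _ m ih =>
    by_cases hne : g = μ
    · exact hne ▸ .refl
    obtain ⟨g', hmove, hd', hlt⟩ := hd.exists_robinHoodMove hμ hne
    exact .head hmove (ih _ (hm ▸ hlt) hd' rfl)

end PrefixDominates

lemma Polynomial.coeff_mul_le_coeff_mul {q r s : ℝ[X]} (h : ∀ n, q.coeff n ≤ r.coeff n)
    (hs : ∀ n, 0 ≤ s.coeff n) (j : ℕ) : (q * s).coeff j ≤ (r * s).coeff j := by
  rw [Polynomial.coeff_mul, Polynomial.coeff_mul]
  exact sum_le_sum fun x _ => mul_le_mul_of_nonneg_right (h x.1) (hs x.2)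

lemma Polynomial.coeff_mul_nonneg {q r : ℝ[X]} (hq : ∀ n, 0 ≤ q.coeff n)
    (hr : ∀ n, 0 ≤ r.coeff n) (n : ℕ) : 0 ≤ (q * r).coeff n := by
  rw [Polynomial.coeff_mul]
  exact sum_nonneg fun x _ => mul_nonneg (hq x.1) (hr x.2)

lemma coeff_trunc_mk_pow_nonneg {p : ℕ → ℝ} (hnn : ∀ n, 0 ≤ p n) (t c n : ℕ) :
    0 ≤ (trunc t (mk p ^ c)).coeff n := by
  rw [coeff_trunc]
  split_ifs
  exacts [coeff_mk_pow_nonneg hnn c n, le_rfl]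

lemma coeff_prod_trunc_mk_pow_nonneg {p : ℕ → ℝ} (hnn : ∀ n, 0 ≤ p n) (S : Finset ℕ)
    (g : ℕ → ℕ) (t n : ℕ) : 0 ≤ (∏ i ∈ S, trunc t (mk p ^ g i)).coeff n := by
  induction S using Finset.induction_on generalizing n with
  | empty => rw [prod_empty, Polynomial.coeff_one]; positivity
  | insert i S hi ih =>
    rw [prod_insert hi]
    exact Polynomial.coeff_mul_nonneg (coeff_trunc_mk_pow_nonneg hnn t (g i)) ih n

lemma coeff_trunc_mk_pow_succ_mul_le {p : ℕ → ℝ} (hnn : ∀ n, 0 ≤ p n)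
    (hTN : IsTN 2 (toeplitz p)) {a b : ℕ} (hba : b ≤ a) (t j : ℕ) :
    (trunc (t + 1) (mk p ^ (a + 1)) * trunc (t + 1) (mk p ^ b)).coeff j ≤
      (trunc (t + 1) (mk p ^ a) * trunc (t + 1) (mk p ^ (b + 1))).coeff j := by
  rw [pow_succ, pow_succ]
  exact (lrGe_mk_pow_of_le hnn hTN hba).coeff_trunc_mul_mk_mul_trunc_le hnn t j

lemma coeff_prod_le_of_robinHoodMove {p : ℕ → ℝ} (hnn : ∀ n, 0 ≤ p n)
    (hTN : IsTN 2 (toeplitz p)) {S : Finset ℕ} {g g' : ℕ → ℕ} (h : RobinHoodMove S g g')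
    (t j : ℕ) :
    (∏ i ∈ S, trunc (t + 1) (mk p ^ g i)).coeff j ≤
      (∏ i ∈ S, trunc (t + 1) (mk p ^ g' i)).coeff j := by
  obtain ⟨r, hr, s, hs, hsr, hg'⟩ := h
  have hrs : r ≠ s := fun h => hsr.ne (h ▸ rfl)
  have hg'r : g' r + 1 = g r := by simpa [Pi.single_eq_of_ne hrs] using congrFun hg' r
  have hg's : g' s = g s + 1 := by simpa [Pi.single_eq_of_ne hrs.symm] using congrFun hg' s
  have hs' : s ∈ S.erase r := mem_erase.2 ⟨hrs.symm, hs⟩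
  have hrest : ∏ i ∈ (S.erase r).erase s, trunc (t + 1) (mk p ^ g' i) =
      ∏ i ∈ (S.erase r).erase s, trunc (t + 1) (mk p ^ g i) := by
    refine prod_congr rfl fun i hi => ?_
    obtain ⟨his, hir, -⟩ := mem_erase.1 hi |>.imp_right mem_erase.1
    have hgi : g' i = g i := by
      simpa [Pi.single_eq_of_ne hir, Pi.single_eq_of_ne his] using congrFun hg' i
    rw [hgi]
  simp only [← mul_prod_erase S _ hr, ← mul_prod_erase (S.erase r) _ hs', ← mul_assoc, hrest]
  refine Polynomial.coeff_mul_le_coeff_mul (fun n => ?_)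
    (coeff_prod_trunc_mk_pow_nonneg hnn _ g _) j
  rw [← hg'r, hg's]
  exact coeff_trunc_mk_pow_succ_mul_le hnn hTN (by omega) t n

lemma coeff_prod_le_of_reflTransGen {p : ℕ → ℝ} (hnn : ∀ n, 0 ≤ p n)
    (hTN : IsTN 2 (toeplitz p)) {S : Finset ℕ} {g g' : ℕ → ℕ}
    (h : ReflTransGen (RobinHoodMove S) g g') (t j : ℕ) :
    (∏ i ∈ S, trunc (t + 1) (mk p ^ g i)).coeff j ≤
      (∏ i ∈ S, trunc (t + 1) (mk p ^ g' i)).coeff j := by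
  induction h with
  | refl => exact le_rfl
  | tail _ hmove ih => exact ih.trans (coeff_prod_le_of_robinHoodMove hnn hTN hmove t j)

namespace PartitionSeq

variable (nu : PartitionSeq) {N : ℕ}

lemma support_subset_Icc (hN : N ∈ upperBounds (Function.support nu.part)) :
    Function.support nu.part ⊆ Icc 1 N := fun _ hi =>
  mem_Icc.2 ⟨Nat.one_le_iff_ne_zero.2 fun h => hi (h ▸ nu.zero), hN hi⟩

lemma antitoneOn_Icc : AntitoneOn nu.part (Icc 1 N) := fun _ hi _ _ hij =>
  nu.antitone (mem_Icc.1 hi).1 hij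

lemma weight_eq_sum (hN : Function.support nu.part ⊆ Icc 1 N) :
    nu.weight = ∑ i ∈ Icc 1 N, nu.part i :=
  finsum_eq_sum_of_support_subset _ hN

lemma fPoly_eq_prod_s14 (hN : Function.support nu.part ⊆ Icc 1 N) (p : ℕ → ℝ) (t : ℕ) :
    fPoly nu p t = ∏ i ∈ Icc 1 N, trunc (t + 1) (PowerSeries.mk p ^ nu.part i) := by
  refine finprod_eq_prod_of_mulSupport_subset _ fun i hi => hN fun h0 => hi ?_
  simp [h0, trunc_one]

lemma Dominates.prefixDominates {lam mu : PartitionSeq} (h : lam.Dominates mu)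
    (hlam : Function.support lam.part ⊆ Icc 1 N) (hmu : Function.support mu.part ⊆ Icc 1 N) :
    PrefixDominates N lam.part mu.part where
  eq_of_notMem i hi := by
    rw [Function.notMem_support.1 (mt (@hlam i) hi), Function.notMem_support.1 (mt (@hmu i) hi)]
  prefix_le := h.2
  sum_eq := by rw [← lam.weight_eq_sum hlam, ← mu.weight_eq_sum hmu, h.1]

end PartitionSeq

theorem condC_of_dominates_general (p : ℕ → ℝ) (hnn : ∀ n, 0 ≤ p n)
    (hTN : IsTN 2 (toeplitz p)) (lam mu : PartitionSeq)
    (h : lam.Dominates mu) : CondC p lam mu := by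
  intro j t
  obtain ⟨N, hN⟩ := (lam.finSupp.union mu.finSupp).bddAbove
  rw [upperBounds_union] at hN
  have hlam := lam.support_subset_Icc hN.1
  have hmu := mu.support_subset_Icc hN.2
  have hmoves := (h.prefixDominates hlam hmu).reflTransGen_robinHoodMove mu.antitoneOn_Icc
  rw [probE, probE, lam.fPoly_eq_prod_s14 hlam, mu.fPoly_eq_prod_s14 hmu]
  exact coeff_prod_le_of_reflTransGen hnn hTN hmoves t j

/-- **Theorem.** If `X` is an ℕ-valued random variable with `X ∈ TN₂`, then for
all partitions `λ, μ`, `λ ⊵ μ` implies `C(λ,μ,X)`. -/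
theorem condC_of_dominates (p : ℕ → ℝ) (hnn : ∀ n, 0 ≤ p n) (hsum : HasSum p 1)
    (hTN : IsTN 2 (toeplitz p)) (lam mu : PartitionSeq)
    (h : lam.Dominates mu) : CondC p lam mu :=
  condC_of_dominates_general p hnn hTN lam mu h
end
end

section
/- Let X be an ℕ-valued random variable with range(X) = {0,1,...,r} for some positive integer r. Then for all partitions λ and μ with |λ| = |μ|, if condition C(λ,μ,X) holds then λ dominates μ. -/
open Finset

noncomputable section

/-! Since `p` vanishes exactly above `r` and is non-negative, `p_X` is a polynomial of degree `r`
with positive coefficients in degrees `0, …, r`. So `(p_X^k)|_t` has degree `min t (r k)` and a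
positive leading coefficient, and `∏_i (p_X^{λ(i)})|_t` has degree `Σ_i min t (r λ(i))` and a
positive leading coefficient. Condition `C` read off at that top degree gives
`Σ_i min t (r λ(i)) ≤ Σ_i min t (r μ(i))`; at `t = r m` this is
`Σ_i min m λ(i) ≤ Σ_i min m μ(i)`. With `|λ| = |μ|` and `m = λ(j)`, the excess `Σ_i (λ(i) - m)`,
carried by the first `j` rows of `λ`, is at least that of `μ`, which is the partial-sum
inequality at `j`. -/

namespace PowerSeries

variable {p : ℕ → ℝ} {r : ℕ}

theorem coeff_mk_pow_nonneg (hnn : ∀ n, 0 ≤ p n) (k d : ℕ) : 0 ≤ coeff d (mk p ^ k) := by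
  induction k generalizing d with
  | zero =>
    rw [pow_zero, coeff_one]
    split_ifs <;> norm_num
  | succ k ih =>
    rw [pow_succ, coeff_mul]
    exact Finset.sum_nonneg fun x _ => mul_nonneg (ih x.1) (by simpa using hnn x.2)

theorem coeff_mk_pow_pos (hnn : ∀ n, 0 ≤ p n) (hpos : ∀ n ≤ r, 0 < p n) (k : ℕ) {d : ℕ}
    (hd : d ≤ r * k) : 0 < coeff d (mk p ^ k) := by
  induction k generalizing d with
  | zero => simp [Nat.eq_zero_of_le_zero (by simpa using hd)]
  | succ k ih =>
    rw [pow_succ, coeff_mul]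
    refine Finset.sum_pos' (fun x _ => mul_nonneg (coeff_mk_pow_nonneg hnn k x.1)
      (by simpa using hnn x.2)) ⟨(d - min d r, min d r), ?_, ?_⟩
    · rw [HasAntidiagonal.mem_antidiagonal]
      omega
    · rw [coeff_mk]
      exact mul_pos (ih (by rw [Nat.mul_succ] at hd; omega)) (hpos _ (min_le_right d r))

theorem coeff_mk_pow_eq_zero (hzero : ∀ n, r < n → p n = 0) (k : ℕ) {d : ℕ} (hd : r * k < d) :
    coeff d (mk p ^ k) = 0 := by
  induction k generalizing d with
  | zero => simp [coeff_one, Nat.pos_iff_ne_zero.mp (by simpa using hd)]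
  | succ k ih =>
    rw [pow_succ, coeff_mul]
    refine Finset.sum_eq_zero fun x hx => ?_
    rw [HasAntidiagonal.mem_antidiagonal] at hx
    by_cases hx1 : r * k < x.1
    · rw [ih hx1, zero_mul]
    · rw [coeff_mk, hzero x.2 (by rw [Nat.mul_succ] at hd; omega), mul_zero]

theorem natDegree_trunc_mk_pow (hnn : ∀ n, 0 ≤ p n) (hrange : ∀ n, p n ≠ 0 ↔ n ≤ r)
    (t k : ℕ) : (trunc (t + 1) (mk p ^ k)).natDegree = min t (r * k) := by
  have hzero : ∀ n, r < n → p n = 0 := fun n hn => by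
    by_contra h
    exact absurd ((hrange n).mp h) (by omega)
  have hpos : ∀ n ≤ r, 0 < p n := fun n hn => (hnn n).lt_of_ne' ((hrange n).mpr hn)
  refine Polynomial.natDegree_eq_of_le_of_coeff_ne_zero ?_ ?_
  · refine Polynomial.natDegree_le_iff_coeff_eq_zero.mpr fun n hn => ?_
    rw [coeff_trunc]
    split_ifs
    · exact coeff_mk_pow_eq_zero hzero k (by omega)
    · rfl
  · rw [coeff_trunc, if_pos (by omega)]
    exact (coeff_mk_pow_pos hnn hpos k (min_le_right _ _)).ne'

theorem leadingCoeff_trunc_mk_pow_pos (hnn : ∀ n, 0 ≤ p n) (hrange : ∀ n, p n ≠ 0 ↔ n ≤ r)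
    (t k : ℕ) : 0 < (trunc (t + 1) (mk p ^ k)).leadingCoeff := by
  rw [Polynomial.leadingCoeff, natDegree_trunc_mk_pow hnn hrange, coeff_trunc, if_pos (by omega)]
  exact coeff_mk_pow_pos hnn (fun n hn => (hnn n).lt_of_ne' ((hrange n).mpr hn)) k
    (min_le_right _ _)

end PowerSeries

theorem Polynomial.natDegree_le_natDegree_of_coeff_le {R : Type*} [Semiring R] [Preorder R]
    {q q' : Polynomial R} (hq : 0 < q.leadingCoeff) (h : ∀ n, q.coeff n ≤ q'.coeff n) :
    q.natDegree ≤ q'.natDegree :=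
  Polynomial.le_natDegree_of_ne_zero (hq.trans_le (h _)).ne'

theorem Finset.sum_le_sum_of_sum_min_le {ι : Type*} {s A : Finset ι} {f g : ι → ℕ} {m : ℕ}
    (hA : A ⊆ s) (hfA : ∀ i ∈ A, m ≤ f i) (hfs : ∀ i ∈ s, i ∉ A → f i ≤ m)
    (hsum : ∑ i ∈ s, f i = ∑ i ∈ s, g i)
    (hmin : ∑ i ∈ s, min m (f i) ≤ ∑ i ∈ s, min m (g i)) :
    ∑ i ∈ A, g i ≤ ∑ i ∈ A, f i := by
  have hsplit (h : ι → ℕ) : ∑ i ∈ s, h i = ∑ i ∈ s, min m (h i) + ∑ i ∈ s, (h i - m) := by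
    rw [← Finset.sum_add_distrib]
    exact Finset.sum_congr rfl fun i _ => by omega
  have hexcess : ∑ i ∈ s, (g i - m) ≤ ∑ i ∈ s, (f i - m) := by
    have := hsplit f
    have := hsplit g
    omega
  have hexcess_f : ∑ i ∈ A, (f i - m) = ∑ i ∈ s, (f i - m) :=
    Finset.sum_subset hA fun i hi hiA => by have := hfs i hi hiA; omega
  calc ∑ i ∈ A, g i ≤ ∑ i ∈ A, (m + (g i - m)) := Finset.sum_le_sum fun i _ => by omega
    _ ≤ ∑ i ∈ A, m + ∑ i ∈ s, (g i - m) := by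
      rw [Finset.sum_add_distrib]
      exact Nat.add_le_add_left (Finset.sum_le_sum_of_subset hA) _
    _ ≤ ∑ i ∈ A, m + ∑ i ∈ A, (f i - m) := by rw [hexcess_f]; exact Nat.add_le_add_left hexcess _
    _ = ∑ i ∈ A, f i := by
      rw [← Finset.sum_add_distrib]
      exact Finset.sum_congr rfl fun i hi => by have := hfA i hi; omega

namespace PartitionSeq

theorem weight_eq_sum_s15 (lam : PartitionSeq) {s : Finset ℕ} (hs : Function.support lam.part ⊆ s) :
    lam.weight = ∑ i ∈ s, lam.part i :=
  finsum_eq_sum_of_support_subset _ hs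

theorem part_le_of_notMem_Icc (lam : PartitionSeq) {i j : ℕ} (hj : 1 ≤ j)
    (hi : i ∉ Finset.Icc 1 j) : lam.part i ≤ lam.part j := by
  rcases Nat.eq_zero_or_pos i with rfl | hi0
  · simp [lam.zero]
  · exact lam.antitone hj (by rw [Finset.mem_Icc] at hi; omega)

end PartitionSeq

section fPoly

variable {p : ℕ → ℝ} {r : ℕ}

theorem fPoly_eq_prod (lam : PartitionSeq) (t : ℕ) {s : Finset ℕ}
    (hs : Function.support lam.part ⊆ s) :
    fPoly lam p t = ∏ i ∈ s, PowerSeries.trunc (t + 1) (PowerSeries.mk p ^ lam.part i) := by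
  refine finprod_eq_prod_of_mulSupport_subset _ fun i hi => hs fun h0 => hi ?_
  simp only [h0, pow_zero, PowerSeries.trunc_one]

theorem natDegree_fPoly (hnn : ∀ n, 0 ≤ p n) (hrange : ∀ n, p n ≠ 0 ↔ n ≤ r)
    (lam : PartitionSeq) (t : ℕ) {s : Finset ℕ} (hs : Function.support lam.part ⊆ s) :
    (fPoly lam p t).natDegree = ∑ i ∈ s, min t (r * lam.part i) := by
  rw [fPoly_eq_prod lam t hs, Polynomial.natDegree_prod _ _ fun i _ =>
    Polynomial.leadingCoeff_ne_zero.mp (PowerSeries.leadingCoeff_trunc_mk_pow_pos hnn hrange t _).ne']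
  simp only [PowerSeries.natDegree_trunc_mk_pow hnn hrange]

theorem leadingCoeff_fPoly_pos (hnn : ∀ n, 0 ≤ p n) (hrange : ∀ n, p n ≠ 0 ↔ n ≤ r)
    (lam : PartitionSeq) (t : ℕ) : 0 < (fPoly lam p t).leadingCoeff := by
  rw [fPoly_eq_prod lam t lam.finSupp.coe_toFinset.ge, Polynomial.leadingCoeff_prod]
  exact Finset.prod_pos fun i _ => PowerSeries.leadingCoeff_trunc_mk_pow_pos hnn hrange t _

theorem CondC.sum_min_le (hnn : ∀ n, 0 ≤ p n) (hr : 1 ≤ r) (hrange : ∀ n, p n ≠ 0 ↔ n ≤ r)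
    {lam mu : PartitionSeq} (h : CondC p lam mu) {s : Finset ℕ}
    (hsl : Function.support lam.part ⊆ s) (hsm : Function.support mu.part ⊆ s) (m : ℕ) :
    ∑ i ∈ s, min m (lam.part i) ≤ ∑ i ∈ s, min m (mu.part i) := by
  have hdeg := Polynomial.natDegree_le_natDegree_of_coeff_le
    (leadingCoeff_fPoly_pos hnn hrange lam (r * m)) fun n => h n (r * m)
  simp only [natDegree_fPoly hnn hrange _ _ hsl, natDegree_fPoly hnn hrange _ _ hsm,
    Nat.mul_min_mul_left, ← Finset.mul_sum] at hdeg
  exact Nat.le_of_mul_le_mul_left hdeg hr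

end fPoly

theorem dominates_of_condC_general (p : ℕ → ℝ) (hnn : ∀ n, 0 ≤ p n)
    (r : ℕ) (hr : 1 ≤ r) (hrange : ∀ n, p n ≠ 0 ↔ n ≤ r)
    (lam mu : PartitionSeq) (hw : lam.weight = mu.weight)
    (h : CondC p lam mu) : lam.Dominates mu := by
  refine ⟨hw, fun j hj => ?_⟩
  set s := lam.finSupp.toFinset ∪ mu.finSupp.toFinset ∪ Finset.Icc 1 j
  have hsl : Function.support lam.part ⊆ s := by
    simp only [s, Finset.coe_union, Set.Finite.coe_toFinset]
    exact Set.subset_union_left.trans Set.subset_union_left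
  have hsm : Function.support mu.part ⊆ s := by
    simp only [s, Finset.coe_union, Set.Finite.coe_toFinset]
    exact Set.subset_union_right.trans Set.subset_union_left
  refine Finset.sum_le_sum_of_sum_min_le Finset.subset_union_right
    (fun i hi => lam.antitone (Finset.mem_Icc.mp hi).1 (Finset.mem_Icc.mp hi).2)
    (fun i _ hi => lam.part_le_of_notMem_Icc hj hi) ?_
    (h.sum_min_le hnn hr hrange hsl hsm (lam.part j))
  rw [← lam.weight_eq_sum_s15 hsl, ← mu.weight_eq_sum_s15 hsm, hw]

/-- **Theorem.** If `X` is an ℕ-valued random variable with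
`range(X) = {0,1,…,r}` for a positive integer `r`, then for all partitions
`λ, μ` with `|λ| = |μ|`, `C(λ,μ,X)` implies `λ ⊵ μ`. -/
theorem dominates_of_condC (p : ℕ → ℝ) (hnn : ∀ n, 0 ≤ p n) (hsum : HasSum p 1)
    (r : ℕ) (hr : 1 ≤ r) (hrange : ∀ n, p n ≠ 0 ↔ n ≤ r)
    (lam mu : PartitionSeq) (hw : lam.weight = mu.weight)
    (h : CondC p lam mu) : lam.Dominates mu :=
  dominates_of_condC_general p hnn r hr hrange lam mu hw h
end
end

section
/- Let r be a positive integer and let p(x) = Σ_{n=0}^r p_n x^n be a polynomial with p_n > 0 for all 0 ≤ n ≤ r. Let λ be a partition and let t be an integer with 1 ≤ t ≤ λ(1). Then the degree of the polynomial ∏_i (p(x)^{λ(i)}|_{rt}) equals r · Σ_{k=1}^t λ'(k), where λ' is the dual (conjugate) partition of λ. -/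
open Finset

noncomputable section

/-- The dual (conjugate) partition: `λ'(i) = |{j ≥ 1 : λ(j) ≥ i}|`. -/
def PartitionSeq.dual (lam : PartitionSeq) (i : ℕ) : ℕ :=
  Set.ncard {j : ℕ | 1 ≤ j ∧ i ≤ lam.part j}

/-!
The `i`-th factor is the truncation at degree `r t` of `p(x)^{λ(i)}`, whose coefficients are
positive exactly up to degree `r λ(i)`; so it is a nonzero polynomial of degree `r min(λ(i), t)`.
Summing over the rows, `Σ_i min(λ(i), t)` counts the cells in the first `t` columns of the Young
diagram of `λ`, which is `Σ_{k ≤ t} λ'(k)`.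
-/

namespace PowerSeries

section Semiring

variable {R : Type*} [Semiring R] {f : R⟦X⟧} {r : ℕ}

theorem coeff_pow_eq_zero_of_mul_lt (hf : ∀ n, r < n → coeff n f = 0) :
    ∀ (m : ℕ) {j : ℕ}, r * m < j → coeff j (f ^ m) = 0
  | 0, j, hj => by rw [pow_zero, coeff_one, if_neg (by omega)]
  | m + 1, j, hj => by
    rw [pow_succ, coeff_mul]
    refine sum_eq_zero fun x hx => ?_
    have hxj : x.1 + x.2 = j := mem_antidiagonal.mp hx
    rcases le_or_gt x.1 (r * m) with h | h
    · rw [hf x.2 (by rw [Nat.mul_succ] at hj; omega), mul_zero]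
    · rw [coeff_pow_eq_zero_of_mul_lt hf m h, zero_mul]

theorem trunc_succ_ne_zero (h : coeff 0 f ≠ 0) (n : ℕ) : f.trunc (n + 1) ≠ 0 := fun hf =>
  h (by simpa [coeff_trunc] using congr_arg (Polynomial.coeff · 0) hf)

variable [PartialOrder R]

theorem coeff_pow_nonneg [IsOrderedRing R] (hf : ∀ n, 0 ≤ coeff n f) :
    ∀ (m j : ℕ), 0 ≤ coeff j (f ^ m)
  | 0, j => by rw [pow_zero, coeff_one]; split_ifs <;> simp
  | m + 1, j => by
    rw [pow_succ, coeff_mul]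
    exact sum_nonneg fun x _ => mul_nonneg (coeff_pow_nonneg hf m x.1) (hf x.2)

theorem coeff_pow_pos [IsStrictOrderedRing R] (hnn : ∀ n, 0 ≤ coeff n f)
    (hpos : ∀ n ≤ r, 0 < coeff n f) : ∀ (m : ℕ) {j : ℕ}, j ≤ r * m → 0 < coeff j (f ^ m)
  | 0, j, hj => by
    obtain rfl : j = 0 := by omega
    simp
  | m + 1, j, hj => by
    rw [pow_succ, coeff_mul]
    -- the term `min j (r m) + (j - min j (r m))` has both degrees in the positive range
    refine sum_pos' (fun x _ => mul_nonneg (coeff_pow_nonneg hnn m x.1) (hnn x.2))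
      ⟨(min j (r * m), j - min j (r * m)), mem_antidiagonal.mpr (by omega), ?_⟩
    rw [Nat.mul_succ] at hj
    exact mul_pos (coeff_pow_pos hnn hpos m (min_le_right _ _)) (hpos _ (by omega))

theorem natDegree_trunc_pow [IsStrictOrderedRing R] (hnn : ∀ n, 0 ≤ coeff n f)
    (hpos : ∀ n ≤ r, 0 < coeff n f) (hzero : ∀ n, r < n → coeff n f = 0) (m t : ℕ) :
    ((f ^ m).trunc (r * t + 1)).natDegree = r * min m t := by
  have hle_t : r * min m t ≤ r * t := Nat.mul_le_mul_left r (min_le_right _ _)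
  have hle_m : r * min m t ≤ r * m := Nat.mul_le_mul_left r (min_le_left _ _)
  refine Polynomial.natDegree_eq_of_le_of_coeff_ne_zero ?_ ?_
  · rw [Polynomial.natDegree_le_iff_coeff_eq_zero]
    intro k hk
    rw [coeff_trunc]
    split_ifs with hkt
    · rcases le_total m t with hmt | htm
      · exact coeff_pow_eq_zero_of_mul_lt hzero m (by rwa [min_eq_left hmt] at hk)
      · rw [min_eq_right htm] at hk
        omega
    · rfl
  · rw [coeff_trunc, if_pos (by omega)]
    exact (coeff_pow_pos hnn hpos m hle_m).ne'

end Semiring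

end PowerSeries

namespace PartitionSeq

theorem dual_eq_card_filter (lam : PartitionSeq) {k : ℕ} (hk : 1 ≤ k) :
    lam.dual k = #{i ∈ lam.finSupp.toFinset | k ≤ lam.part i} := by
  rw [dual, ← Set.ncard_coe_finset]
  congr 1
  ext i
  simp only [coe_filter, Set.mem_ofPred_eq, Set.Finite.mem_toFinset, Function.mem_support]
  constructor
  · rintro ⟨-, hki⟩
    exact ⟨by omega, hki⟩
  · rintro ⟨-, hki⟩
    refine ⟨Nat.one_le_iff_ne_zero.mpr fun hi => ?_, hki⟩
    rw [hi, lam.zero] at hki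
    omega

/-- Counting the cells of the first `t` columns of the Young diagram of `λ` row by row and
column by column. -/
theorem sum_min_eq_sum_dual (lam : PartitionSeq) (t : ℕ) :
    ∑ i ∈ lam.finSupp.toFinset, min (lam.part i) t = ∑ k ∈ Icc 1 t, lam.dual k := by
  have hrow : ∀ i, min (lam.part i) t = #{k ∈ Icc 1 t | k ≤ lam.part i} := fun i => by
    rw [show {k ∈ Icc 1 t | k ≤ lam.part i} = Icc 1 (min (lam.part i) t) by
      ext k; simp only [mem_filter, mem_Icc]; omega]
    simp
  simp_rw [hrow, card_filter]
  rw [sum_comm]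
  refine sum_congr rfl fun k hk => ?_
  rw [dual_eq_card_filter lam (mem_Icc.mp hk).1, card_filter]

end PartitionSeq

theorem degree_trunc_prod_general (r : ℕ) (p : ℕ → ℝ)
    (hpos : ∀ n ≤ r, 0 < p n) (hzero : ∀ n, r < n → p n = 0)
    (lam : PartitionSeq) (t : ℕ) :
    (∏ᶠ i : ℕ, (PowerSeries.mk p ^ lam.part i).trunc (r * t + 1)).natDegree =
      r * ∑ k ∈ Finset.Icc 1 t, lam.dual k := by
  have hpos' : ∀ n ≤ r, 0 < PowerSeries.coeff n (PowerSeries.mk p) := by simpa using hpos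
  have hzero' : ∀ n, r < n → PowerSeries.coeff n (PowerSeries.mk p) = 0 := by simpa using hzero
  have hnn : ∀ n, 0 ≤ PowerSeries.coeff n (PowerSeries.mk p) := fun n =>
    (le_or_gt n r).elim (fun h => (hpos' n h).le) fun h => (hzero' n h).ge
  have hsupp : Function.mulSupport
      (fun i => (PowerSeries.mk p ^ lam.part i).trunc (r * t + 1)) ⊆ lam.finSupp.toFinset := by
    intro i hi
    contrapose! hi
    simp_all
  have hfactor : ∀ i, (PowerSeries.mk p ^ lam.part i).trunc (r * t + 1) ≠ 0 := fun i =>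
    PowerSeries.trunc_succ_ne_zero (PowerSeries.coeff_pow_pos hnn hpos' _ (Nat.zero_le _)).ne' _
  rw [finprod_eq_prod_of_mulSupport_subset _ hsupp,
    Polynomial.natDegree_prod _ _ fun i _ => hfactor i]
  simp_rw [PowerSeries.natDegree_trunc_pow hnn hpos' hzero', ← mul_sum]
  rw [lam.sum_min_eq_sum_dual]

/-- **Degree computation.** If `p(x) = Σ_{n=0}^r p_n x^n` with all `p_n > 0`
for `0 ≤ n ≤ r`, `λ` is a partition and `1 ≤ t ≤ λ(1)`, then
`deg ∏_i (p(x)^{λ(i)} |_{rt}) = r Σ_{k=1}^t λ'(k)`. -/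
theorem degree_trunc_prod (r : ℕ) (hr : 1 ≤ r) (p : ℕ → ℝ)
    (hpos : ∀ n ≤ r, 0 < p n) (hzero : ∀ n, r < n → p n = 0)
    (lam : PartitionSeq) (t : ℕ) (ht1 : 1 ≤ t) (ht2 : t ≤ lam.part 1) :
    (∏ᶠ i : ℕ, (PowerSeries.mk p ^ lam.part i).trunc (r * t + 1)).natDegree =
      r * ∑ k ∈ Finset.Icc 1 t, lam.dual k :=
  degree_trunc_prod_general r p hpos hzero lam t
end
end

section
/- Let Y be the random variable distributed uniformly on {0,1,3}, i.e. P(Y=k) = 1/3 for k ∈ {0,1,3} and 0 otherwise. Then the partition (4,2) dominates the partition (3,3), yet P(E((4,2),Y,12,6)) = 10/729 > 9/729 = P(E((3,3),Y,12,6)); in particular, condition C((4,2),(3,3),Y) fails. -/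
open Finset

noncomputable section

/-- The partition `(4,2)`. -/
def part42 : PartitionSeq where
  part := fun i => if i = 1 then 4 else if i = 2 then 2 else 0
  zero := rfl
  antitone := by intro i j hi hij; (try dsimp only); split_ifs <;> omega
  finSupp := by
    apply Set.Finite.subset (Set.finite_Iic 2)
    intro x hx
    simp only [Function.mem_support] at hx
    by_contra hc
    simp only [Set.mem_Iic, not_le] at hc
    apply hx
    have h1 : x ≠ 1 := by omega
    have h2 : x ≠ 2 := by omega
    simp [h1, h2]

/-- The partition `(3,3)`. -/
def part33 : PartitionSeq where
  part := fun i => if i = 1 then 3 else if i = 2 then 3 else 0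
  zero := rfl
  antitone := by intro i j hi hij; (try dsimp only); split_ifs <;> omega
  finSupp := by
    apply Set.Finite.subset (Set.finite_Iic 2)
    intro x hx
    simp only [Function.mem_support] at hx
    by_contra hc
    simp only [Set.mem_Iic, not_le] at hc
    apply hx
    have h1 : x ≠ 1 := by omega
    have h2 : x ≠ 2 := by omega
    simp [h1, h2]

/-- The pmf of `Y`, uniform on `{0,1,3}`. -/
def pmfY : ℕ → ℝ := fun k => if k = 0 ∨ k = 1 ∨ k = 3 then 1 / 3 else 0

/-! For a partition with at most two rows and `j = 2t`, both truncated factors of `fPoly` have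
degree at most `t`, so the coefficient of `x^{2t}` is the product of the two coefficients of `x^t`:
`P(E((a,b),Y,2t,t)) = [x^t] p_Y^a · [x^t] p_Y^b`. For `p_Y = (1 + x + x³)/3` the coefficient of
`x⁶` in `(1 + x + x³)^k` is `1, 3, 10` for `k = 2, 3, 4`, so `(4,2)` gives `10 · 1 / 3⁶` while
`(3,3)` gives only `3 · 3 / 3⁶`. -/

namespace PartitionSeq

variable (lam : PartitionSeq) {n : ℕ}

lemma sum_Icc_eq_weight (hlam : ∀ i, n < i → lam.part i = 0) {j : ℕ} (hj : n ≤ j) :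
    ∑ i ∈ Icc 1 j, lam.part i = lam.weight := by
  refine (finsum_eq_sum_of_support_subset _ fun i hi => ?_).symm
  rw [Function.mem_support] at hi
  have hi0 : i ≠ 0 := by rintro rfl; exact hi lam.zero
  have hin : i ≤ n := by by_contra h; exact hi (hlam i (by omega))
  simp only [coe_Icc, Set.mem_Icc]
  omega

lemma fPoly_eq_prod_Icc (hlam : ∀ i, n < i → lam.part i = 0) (p : ℕ → ℝ) (t : ℕ) :
    fPoly lam p t =
      ∏ i ∈ Icc 1 n, PowerSeries.trunc (t + 1) (PowerSeries.mk p ^ lam.part i) := by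
  refine finprod_eq_prod_of_mulSupport_subset _ fun i hi => ?_
  rw [Function.mem_mulSupport] at hi
  have hi0 : lam.part i ≠ 0 := by intro h; exact hi (by rw [h, pow_zero, PowerSeries.trunc_one])
  have hi1 : i ≠ 0 := by rintro rfl; exact hi0 lam.zero
  have hin : i ≤ n := by by_contra h; exact hi0 (hlam i (by omega))
  simp only [coe_Icc, Set.mem_Icc]
  omega

lemma sum_Icc_one_two : ∑ i ∈ Icc 1 2, lam.part i = lam.part 1 + lam.part 2 := by
  rw [show Icc 1 2 = {1, 2} by decide, sum_pair (by decide)]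

lemma dominates_of_length_le_two (mu : PartitionSeq) (hlam : ∀ i, 2 < i → lam.part i = 0)
    (hmu : ∀ i, 2 < i → mu.part i = 0) (hsum : lam.part 1 + lam.part 2 = mu.part 1 + mu.part 2)
    (hfirst : mu.part 1 ≤ lam.part 1) : lam.Dominates mu := by
  have hweight : lam.weight = mu.weight := by
    rw [← lam.sum_Icc_eq_weight hlam le_rfl, ← mu.sum_Icc_eq_weight hmu le_rfl,
      sum_Icc_one_two, sum_Icc_one_two, hsum]
  refine ⟨hweight, fun j hj => ?_⟩
  obtain rfl | hj := eq_or_lt_of_le hj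
  · simpa using hfirst
  · rw [lam.sum_Icc_eq_weight hlam hj, mu.sum_Icc_eq_weight hmu hj, hweight]

lemma probE_add_self_of_length_le_two (hlam : ∀ i, 2 < i → lam.part i = 0) (p : ℕ → ℝ)
    (t : ℕ) : probE p lam (t + t) t =
      PowerSeries.coeff t (PowerSeries.mk p ^ lam.part 1) *
        PowerSeries.coeff t (PowerSeries.mk p ^ lam.part 2) := by
  have hdeg (f : PowerSeries ℝ) : (PowerSeries.trunc (t + 1) f).natDegree ≤ t :=
    Nat.lt_succ_iff.mp (PowerSeries.natDegree_trunc_lt f t)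
  rw [probE, lam.fPoly_eq_prod_Icc hlam, show Icc 1 2 = {1, 2} by decide, prod_pair (by decide),
    Polynomial.coeff_mul_add_eq_of_natDegree_le (hdeg _) (hdeg _), PowerSeries.coeff_trunc,
    PowerSeries.coeff_trunc, if_pos (by omega), if_pos (by omega)]

end PartitionSeq

lemma part42_length_le_two : ∀ i, 2 < i → part42.part i = 0 := by
  intro i hi
  simp only [part42]
  split_ifs <;> omega

lemma part33_length_le_two : ∀ i, 2 < i → part33.part i = 0 := by
  intro i hi
  simp only [part33]
  split_ifs <;> omega

open Polynomial in
lemma mk_pmfY :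
    PowerSeries.mk pmfY = ((C (1 / 3) * (1 + X + X ^ 3) : ℝ[X]) : PowerSeries ℝ) := by
  ext n
  rw [PowerSeries.coeff_mk, Polynomial.coeff_coe]
  simp only [pmfY, coeff_C_mul, coeff_add, coeff_one, coeff_X, coeff_X_pow]
  rcases n with _ | _ | _ | _ | n <;> norm_num

open Polynomial in
lemma coeff_mk_pmfY_pow (k n : ℕ) :
    PowerSeries.coeff n (PowerSeries.mk pmfY ^ k) =
      (1 / 3) ^ k * ((1 + X + X ^ 3 : ℝ[X]) ^ k).coeff n := by
  rw [mk_pmfY, ← Polynomial.coe_pow, Polynomial.coeff_coe, mul_pow, ← C_pow, coeff_C_mul]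

open Polynomial in
lemma probE_pmfY_part42 : probE pmfY part42 12 6 = 10 / 729 := by
  have h4 : ((1 + X + X ^ 3 : ℝ[X]) ^ 4).coeff 6 = 10 := by
    ring_nf; simp [coeff_X, coeff_one, coeff_X_pow]
  have h2 : ((1 + X + X ^ 3 : ℝ[X]) ^ 2).coeff 6 = 1 := by
    ring_nf; simp [coeff_X, coeff_one, coeff_X_pow]
  rw [show 12 = 6 + 6 from rfl, part42.probE_add_self_of_length_le_two part42_length_le_two,
    show part42.part 1 = 4 from rfl, show part42.part 2 = 2 from rfl, coeff_mk_pmfY_pow,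
    coeff_mk_pmfY_pow, h4, h2]
  norm_num

open Polynomial in
lemma probE_pmfY_part33 : probE pmfY part33 12 6 = 9 / 729 := by
  have h3 : ((1 + X + X ^ 3 : ℝ[X]) ^ 3).coeff 6 = 3 := by
    ring_nf; simp [coeff_X, coeff_one, coeff_X_pow]
  rw [show 12 = 6 + 6 from rfl, part33.probE_add_self_of_length_le_two part33_length_le_two,
    show part33.part 1 = 3 from rfl, show part33.part 2 = 3 from rfl, coeff_mk_pmfY_pow, h3]
  norm_num

/-- **Counterexample.** For `Y` uniform on `{0,1,3}`: `(4,2) ⊵ (3,3)`, yet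
`P(E((4,2),Y,12,6)) = 10/729 > 9/729 = P(E((3,3),Y,12,6))`; in particular
`C((4,2),(3,3),Y)` fails. -/
theorem counterexample_uniform_013 :
    part42.Dominates part33 ∧
    probE pmfY part42 12 6 = 10 / 729 ∧
    probE pmfY part33 12 6 = 9 / 729 ∧
    (9 : ℝ) / 729 < 10 / 729 ∧
    ¬ CondC pmfY part42 part33 := by
  have hdom : part42.Dominates part33 :=
    part42.dominates_of_length_le_two part33 part42_length_le_two part33_length_le_two rfl
      (by decide)
  refine ⟨hdom, probE_pmfY_part42, probE_pmfY_part33, by norm_num, fun hC => ?_⟩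
  have h := hC 12 6
  rw [probE_pmfY_part42, probE_pmfY_part33] at h
  norm_num at h
end
end
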